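/- arXiv:2509.00495 — 6 statements merged into one kernel-verified Lean document; each statement's English description precedes it below -/
import Mathlib

section
/- Let A be an n×n real symmetric matrix, 1 ≤ p < q ≤ n, and let G = G(p,q,θ) be a Givens rotation such that B = Gᵀ A G satisfies B_{pq} = B_{qp} = 0. Then off(B)² = off(A)² − 2 a_{pq}², where off(M)² denotes the sum of squares of the off-diagonal entries of M. -/
open Matrix BigOperators

/-- The Givens rotation `G(p, q, θ)`: the identity matrix except that
`G p p = G q q = cos θ`, `G p q = sin θ` and `G q p = -sin θ`. -/
noncomputable def givens (n : ℕ) (p q : Fin n) (θ : ℝ) : Matrix (Fin n) (Fin n) ℝ :=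
  Matrix.of fun r t =>
    if r = p ∧ t = p then Real.cos θ
    else if r = q ∧ t = q then Real.cos θ
    else if r = p ∧ t = q then Real.sin θ
    else if r = q ∧ t = p then -Real.sin θ
    else if r = t then 1 else 0

/-- `off(M)²`: the sum of squares of the off-diagonal entries of `M`. -/
def offSq {n : ℕ} (M : Matrix (Fin n) (Fin n) ℝ) : ℝ :=
  ∑ i, ∑ j, if i = j then 0 else (M i j) ^ 2

section aux
variable {n : ℕ} {p q : Fin n} (θ : ℝ)

lemma sum_pq (hpq : p ≠ q) (f : Fin n → ℝ) (h : ∀ k, k ≠ p → k ≠ q → f k = 0) :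
    ∑ k, f k = f p + f q :=
  Finset.sum_eq_add p q hpq (fun c _ hc => h c hc.1 hc.2)
    (fun h' => absurd (Finset.mem_univ p) h') (fun h' => absurd (Finset.mem_univ q) h')

lemma givens_col_p (hpq : p ≠ q) (k : Fin n) :
    givens n p q θ k p = if k = p then Real.cos θ else if k = q then -Real.sin θ else 0 := by
  simp only [givens, Matrix.of_apply]
  by_cases hkp : k = p <;> by_cases hkq : k = q <;> simp_all [hpq, Ne.symm hpq]

lemma givens_col_q (hpq : p ≠ q) (k : Fin n) :
    givens n p q θ k q = if k = p then Real.sin θ else if k = q then Real.cos θ else 0 := by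
  simp only [givens, Matrix.of_apply]
  by_cases hkp : k = p <;> by_cases hkq : k = q <;> simp_all [hpq, Ne.symm hpq]

lemma givens_col_other {i : Fin n} (hip : i ≠ p) (hiq : i ≠ q) (k : Fin n) :
    givens n p q θ k i = if k = i then 1 else 0 := by
  simp only [givens, Matrix.of_apply]
  by_cases hkp : k = p <;> by_cases hkq : k = q <;> by_cases hki : k = i <;>
    simp_all [hip, hiq]



lemma givens_orth (hpq : p ≠ q) : (givens n p q θ)ᵀ * givens n p q θ = 1 := by
  have hqp := Ne.symm hpq
  ext i j
  rw [Matrix.mul_apply, Matrix.one_apply]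
  simp only [Matrix.transpose_apply]
  rcases eq_or_ne i p with hip | hip
  · rw [hip]
    rw [sum_pq hpq _ (fun k hkp hkq => by
        rw [givens_col_p θ hpq k, if_neg hkp, if_neg hkq, zero_mul])]
    rcases eq_or_ne j p with hjp | hjp
    · rw [hjp]
      simp [givens_col_p θ hpq, hqp]
      linear_combination Real.sin_sq_add_cos_sq θ
    · rcases eq_or_ne j q with hjq | hjq
      · rw [hjq]
        simp [givens_col_p θ hpq, givens_col_q θ hpq, hpq, hqp, mul_comm]
      · simp [givens_col_p θ hpq, givens_col_other θ hjp hjq, hqp,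
          Ne.symm hjp, Ne.symm hjq]
  · rcases eq_or_ne i q with hiq | hiq
    · rw [hiq]
      rw [sum_pq hpq _ (fun k hkp hkq => by
          rw [givens_col_q θ hpq k, if_neg hkp, if_neg hkq, zero_mul])]
      rcases eq_or_ne j p with hjp | hjp
      · rw [hjp]
        simp [givens_col_p θ hpq, givens_col_q θ hpq, hpq, hqp, mul_comm]
      · rcases eq_or_ne j q with hjq | hjq
        · rw [hjq]
          simp [givens_col_q θ hpq, hpq, hqp]
          linear_combination Real.sin_sq_add_cos_sq θ
        · simp [givens_col_q θ hpq, givens_col_other θ hjp hjq, hpq, hqp,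
            Ne.symm hjp, Ne.symm hjq]
    · simp only [givens_col_other θ hip hiq, ite_mul, one_mul, zero_mul,
        Finset.sum_ite_eq' Finset.univ, Finset.mem_univ, if_true]
      rcases eq_or_ne j p with hjp | hjp
      · rw [hjp]
        simp [givens_col_p θ hpq, hip, hiq]
      · rcases eq_or_ne j q with hjq | hjq
        · rw [hjq]
          simp [givens_col_q θ hpq, hip, hiq]
        · rw [givens_col_other θ hjp hjq i]

lemma entry_other (A : Matrix (Fin n) (Fin n) ℝ) {i j : Fin n}
    (hip : i ≠ p) (hiq : i ≠ q) (hjp : j ≠ p) (hjq : j ≠ q) :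
    ((givens n p q θ)ᵀ * A * givens n p q θ) i j = A i j := by
  simp only [Matrix.mul_apply, Matrix.transpose_apply,
    givens_col_other θ hip hiq, givens_col_other θ hjp hjq,
    ite_mul, mul_ite, one_mul, zero_mul, mul_one, mul_zero,
    Finset.sum_ite_eq' Finset.univ, Finset.mem_univ, if_true]

lemma entry_pq (hpq : p ≠ q) (A : Matrix (Fin n) (Fin n) ℝ) {i j : Fin n}
    (hi : i = p ∨ i = q) (hj : j = p ∨ j = q) :
    ((givens n p q θ)ᵀ * A * givens n p q θ) i j =
      givens n p q θ p i * A p p * givens n p q θ p j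
      + givens n p q θ p i * A p q * givens n p q θ q j
      + givens n p q θ q i * A q p * givens n p q θ p j
      + givens n p q θ q i * A q q * givens n p q θ q j := by
  have hv : ∀ m : Fin n, (m = p ∨ m = q) → ∀ l, l ≠ p → l ≠ q →
      givens n p q θ l m = 0 := by
    rintro m (rfl | rfl) l hlp hlq
    · rw [givens_col_p θ hpq, if_neg hlp, if_neg hlq]
    · rw [givens_col_q θ hpq, if_neg hlp, if_neg hlq]
  simp only [Matrix.mul_apply, Matrix.transpose_apply]
  rw [sum_pq hpq _ (fun l hlp hlq => by rw [hv j hj l hlp hlq, mul_zero])]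
  rw [sum_pq hpq _ (fun k hkp hkq => by rw [hv i hi k hkp hkq, zero_mul]),
      sum_pq hpq _ (fun k hkp hkq => by rw [hv i hi k hkp hkq, zero_mul])]
  ring

end aux

lemma offSq_eq {n : ℕ} (M : Matrix (Fin n) (Fin n) ℝ) :
    offSq M = (∑ i, ∑ j, (M i j)^2) - ∑ i, (M i i)^2 := by
  unfold offSq
  rw [← Finset.sum_sub_distrib]
  refine Finset.sum_congr rfl fun i _ => ?_
  rw [show (∑ j, if i = j then (0:ℝ) else (M i j)^2)
      = ∑ j, ((M i j)^2 - if i = j then (M i j)^2 else 0) from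
      Finset.sum_congr rfl fun j _ => by split <;> ring]
  rw [Finset.sum_sub_distrib, Finset.sum_ite_eq Finset.univ i, if_pos (Finset.mem_univ i)]

/-- If a Givens rotation annihilates the `(p,q)` and `(q,p)` entries of a symmetric matrix `A`,
then `off(B)² = off(A)² - 2 a_{pq}²`. -/
theorem offSq_givens_update {n : ℕ}
    (A : Matrix (Fin n) (Fin n) ℝ) (hA : A.IsSymm)
    (p q : Fin n) (hpq : p < q) (θ : ℝ)
    (B : Matrix (Fin n) (Fin n) ℝ)
    (hB : B = (givens n p q θ)ᵀ * A * givens n p q θ)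
    (hBpq : B p q = 0) (hBqp : B q p = 0) :
    offSq B = offSq A - 2 * (A p q) ^ 2 := by
  have hne : p ≠ q := hpq.ne
  have hqp : q ≠ p := hne.symm
  have horth : (givens n p q θ)ᵀ * givens n p q θ = 1 := givens_orth θ hne
  have horth' : givens n p q θ * (givens n p q θ)ᵀ = 1 := mul_eq_one_comm.mp horth
  have hApq : A q p = A p q := hA.apply p q
  -- explicit entries of the rotation
  have hGpp : givens n p q θ p p = Real.cos θ := by
    rw [givens_col_p θ hne, if_pos rfl]
  have hGqp : givens n p q θ q p = -Real.sin θ := by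
    rw [givens_col_p θ hne, if_neg hqp, if_pos rfl]
  have hGpq : givens n p q θ p q = Real.sin θ := by
    rw [givens_col_q θ hne, if_pos rfl]
  have hGqq : givens n p q θ q q = Real.cos θ := by
    rw [givens_col_q θ hne, if_neg hqp, if_pos rfl]
  -- total sum of squares is preserved
  have key : ∀ M : Matrix (Fin n) (Fin n) ℝ,
      ∑ i, ∑ j, (M i j)^2 = Matrix.trace (Mᵀ * M) := by
    intro M
    rw [Matrix.trace, Finset.sum_comm]
    simp only [Matrix.diag_apply, Matrix.mul_apply, Matrix.transpose_apply]
    simp [pow_two]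
  have htot : ∑ i, ∑ j, (B i j)^2 = ∑ i, ∑ j, (A i j)^2 := by
    have hGG : ∀ X : Matrix (Fin n) (Fin n) ℝ,
        givens n p q θ * ((givens n p q θ)ᵀ * X) = X := fun X => by
      rw [← Matrix.mul_assoc, horth', Matrix.one_mul]
    have hBtB : Bᵀ * B = (givens n p q θ)ᵀ * (Aᵀ * A) * givens n p q θ := by
      rw [hB]
      simp only [Matrix.transpose_mul, Matrix.transpose_transpose, Matrix.mul_assoc, hGG]
    rw [key, key, hBtB, Matrix.trace_mul_cycle, ← Matrix.mul_assoc, horth', Matrix.one_mul]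
  -- entries of the 2×2 block
  have hBpp : B p p = Real.cos θ * Real.cos θ * A p p
      - 2 * (Real.cos θ * Real.sin θ) * A p q + Real.sin θ * Real.sin θ * A q q := by
    rw [hB, entry_pq θ hne A (Or.inl rfl) (Or.inl rfl), hGpp, hGqp, hApq]; ring
  have hBqq : B q q = Real.sin θ * Real.sin θ * A p p
      + 2 * (Real.cos θ * Real.sin θ) * A p q + Real.cos θ * Real.cos θ * A q q := by
    rw [hB, entry_pq θ hne A (Or.inr rfl) (Or.inr rfl), hGpq, hGqq, hApq]; ring
  have hBpq' : Real.cos θ * Real.sin θ * A p p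
      + (Real.cos θ * Real.cos θ - Real.sin θ * Real.sin θ) * A p q
      - Real.cos θ * Real.sin θ * A q q = 0 := by
    have h := hBpq
    rw [hB, entry_pq θ hne A (Or.inl rfl) (Or.inr rfl), hGpp, hGqp, hGpq, hGqq, hApq] at h
    linear_combination h
  have hkey : (B p p)^2 + (B q q)^2 = (A p p)^2 + (A q q)^2 + 2*(A p q)^2 := by
    rw [hBpp, hBqq]
    have ht := Real.sin_sq_add_cos_sq θ
    linear_combination ((Real.sin θ^2 + Real.cos θ^2 + 1)
        * ((A p p)^2 + (A q q)^2 + 2*(A p q)^2)) * ht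
      - (2 * (Real.cos θ * Real.sin θ * A p p
          + (Real.cos θ * Real.cos θ - Real.sin θ * Real.sin θ) * A p q
          - Real.cos θ * Real.sin θ * A q q)) * hBpq'
  -- diagonal sum
  have hdiag : ∑ i, (B i i)^2 = (∑ i, (A i i)^2) + 2 * (A p q)^2 := by
    have hsplit : ∑ i, ((B i i)^2 - (A i i)^2)
        = ((B p p)^2 - (A p p)^2) + ((B q q)^2 - (A q q)^2) := by
      apply sum_pq hne
      intro k hkp hkq
      rw [hB, entry_other θ A hkp hkq hkp hkq, sub_self]
    rw [Finset.sum_sub_distrib] at hsplit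
    have := hkey
    linarith
  rw [offSq_eq, offSq_eq, htot, hdiag]
  ring
end

section
/- (Lidskii/Mirsky-type eigenvalue inequality) Let X and Y be n×n complex Hermitian matrices with eigenvalues ξ₁ ≥ … ≥ ξ_n of X, η₁ ≥ … ≥ η_n of Y, and ζ₁ ≥ … ≥ ζ_n of X − Y (all counted with multiplicity and listed in non-increasing order). Let (ξ−η)₁ ≥ … ≥ (ξ−η)_n denote the numbers ξ₁−η₁, …, ξ_n−η_n rearranged in non-increasing order. Then for every k with 1 ≤ k ≤ n: ∑_{i=1}^{k} (ξ−η)_i ≤ ∑_{i=1}^{k} ζ_i. -/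
open Matrix BigOperators Finset Polynomial
open scoped ComplexOrder

/-! ### Auxiliary lemmas for Lidskii's theorem -/

theorem aux_rc_eq (r : ℝ) : (RCLike.ofReal r : ℂ) = Complex.ofReal r := rfl

theorem aux_charpoly_diagonal {n : ℕ} (d : Fin n → ℂ) :
    (Matrix.diagonal d).charpoly = ∏ i, (X - C (d i)) := by
  rw [Matrix.charpoly]
  have : charmatrix (Matrix.diagonal d) = Matrix.diagonal (fun i => (X:ℂ[X]) - C (d i)) := by
    ext i j
    by_cases h : i = j <;> simp [charmatrix_apply, Matrix.diagonal_apply, h]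
  rw [this, Matrix.det_diagonal]

theorem aux_charpoly_conj {n : ℕ} (A : Matrix (Fin n) (Fin n) ℂ) (U : Matrix (Fin n) (Fin n) ℂ)
    (h1 : U * star U = 1) (h2 : star U * U = 1) :
    (U * A * star U).charpoly = A.charpoly := by
  unfold Matrix.charpoly
  have key : charmatrix (U * A * star U) =
      (U.map C) * charmatrix A * ((star U).map C) := by
    unfold charmatrix
    rw [Matrix.mul_sub, Matrix.sub_mul]
    congr 1
    · rw [((Matrix.scalar_commute (X : ℂ[X]) (fun r => Commute.all X r) (U.map C)).symm.eq),
        mul_assoc, ← Matrix.map_mul, h1]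
      simp
    · simp [Matrix.map_mul]
  rw [key, Matrix.det_mul, Matrix.det_mul, mul_comm, ← mul_assoc, ← Matrix.det_mul,
    ← Matrix.map_mul, h2]
  simp

theorem aux_charpoly_eig {n : ℕ} {A : Matrix (Fin n) (Fin n) ℂ} (hA : A.IsHermitian) :
    A.charpoly = ∏ i, (X - C ((hA.eigenvalues i : ℂ))) := by
  conv_lhs => rw [hA.spectral_theorem, Unitary.conjStarAlgAut_apply]
  rw [aux_charpoly_conj _ _ (Matrix.mem_unitaryGroup_iff.mp (hA.eigenvectorUnitary).2)
    (Matrix.mem_unitaryGroup_iff'.mp (hA.eigenvectorUnitary).2), aux_charpoly_diagonal]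
  rfl

theorem aux_roots_eig {n : ℕ} {A : Matrix (Fin n) (Fin n) ℂ} (hA : A.IsHermitian) :
    A.charpoly.roots = Multiset.map (fun i => (hA.eigenvalues i : ℂ)) Finset.univ.val := by
  rw [aux_charpoly_eig hA]
  have := Polynomial.roots_multiset_prod_X_sub_C
    (Multiset.map (fun i => (hA.eigenvalues i : ℂ)) Finset.univ.val)
  rw [← this]
  congr 1
  rw [Finset.prod, Multiset.map_map]
  rfl

theorem aux_eig_multiset {n : ℕ} {A : Matrix (Fin n) (Fin n) ℂ} (hA : A.IsHermitian)
    (U : Matrix (Fin n) (Fin n) ℂ) (h1 : U * star U = 1) (h2 : star U * U = 1)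
    (d : Fin n → ℝ) (hAd : A = U * Matrix.diagonal (fun i => (d i : ℂ)) * star U) :
    Multiset.map hA.eigenvalues Finset.univ.val = Multiset.map d Finset.univ.val := by
  have hc : A.charpoly = ∏ i, (X - C ((d i : ℂ))) := by
    rw [hAd, aux_charpoly_conj _ _ h1 h2, aux_charpoly_diagonal]
  have hroots : Multiset.map (fun i => (hA.eigenvalues i : ℂ)) Finset.univ.val
      = Multiset.map (fun i => (d i : ℂ)) Finset.univ.val := by
    rw [← aux_roots_eig hA, hc]
    have := Polynomial.roots_multiset_prod_X_sub_C
      (Multiset.map (fun i => (d i : ℂ)) Finset.univ.val)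
    rw [← this]
    congr 1
    rw [Finset.prod, Multiset.map_map]
    rfl
  have : Multiset.map (fun x : ℝ => (x:ℂ)) (Multiset.map hA.eigenvalues Finset.univ.val)
      = Multiset.map (fun x : ℝ => (x:ℂ)) (Multiset.map d Finset.univ.val) := by
    simpa [Multiset.map_map, Function.comp_def] using hroots
  exact Multiset.map_injective Complex.ofReal_injective this

theorem aux_trace_eig {n : ℕ} {A : Matrix (Fin n) (Fin n) ℂ} (hA : A.IsHermitian) :
    A.trace = ((∑ i, hA.eigenvalues i : ℝ) : ℂ) := by
  rw [Matrix.trace_eq_sum_roots_charpoly, aux_roots_eig hA]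
  rw [show (Multiset.map (fun i => (hA.eigenvalues i : ℂ)) Finset.univ.val).sum
    = ∑ i, (hA.eigenvalues i : ℂ) from rfl]
  push_cast
  rfl

theorem aux_multiset_ofFn {n : ℕ} (f : Fin n → ℝ) :
    Multiset.map f Finset.univ.val = ↑(List.ofFn f) := by
  rw [List.ofFn_eq_map]
  rfl

theorem aux_exists_antitone {n : ℕ} (f : Fin n → ℝ) :
    ∃ g : Fin n → ℝ, Antitone g ∧
      Multiset.map g Finset.univ.val = Multiset.map f Finset.univ.val := by
  refine ⟨f ∘ Tuple.sort f ∘ Fin.rev, ?_, ?_⟩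
  · intro i j hij
    exact Tuple.monotone_sort f (Fin.rev_le_rev.mpr hij)
  · have h0 : (f ∘ Tuple.sort f ∘ Fin.rev)
        = f ∘ ((Fin.revPerm.trans (Tuple.sort f)) : Equiv.Perm (Fin n)) := rfl
    rw [h0]
    have h1 : Multiset.map (⇑(Fin.revPerm.trans (Tuple.sort f))) Finset.univ.val
        = Finset.univ.val := by
      have h2 := congr_arg Finset.val (Finset.map_univ_equiv (Fin.revPerm.trans (Tuple.sort f)))
      rw [Finset.map_val] at h2
      exact h2
    rw [← Multiset.map_map, h1]

theorem aux_sum_transport {n : ℕ} {f g : Fin n → ℝ}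
    (h : Multiset.map f Finset.univ.val = Multiset.map g Finset.univ.val) (φ : ℝ → ℝ) :
    ∑ i, φ (f i) = ∑ i, φ (g i) := by
  have h2 : Multiset.map (φ ∘ f) Finset.univ.val = Multiset.map (φ ∘ g) Finset.univ.val := by
    rw [← Multiset.map_map, ← Multiset.map_map, h]
  calc ∑ i, φ (f i) = (Multiset.map (φ ∘ f) Finset.univ.val).sum := rfl
    _ = (Multiset.map (φ ∘ g) Finset.univ.val).sum := by rw [h2]
    _ = ∑ i, φ (g i) := rfl

theorem aux_sum_transport' {n : ℕ} {f g : Fin n → ℝ}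
    (h : Multiset.map f Finset.univ.val = Multiset.map g Finset.univ.val) :
    ∑ i, f i = ∑ i, g i := by
  simpa using aux_sum_transport h id

theorem aux_quad {n : ℕ} {A : Matrix (Fin n) (Fin n) ℂ} (hA : A.IsHermitian) (x : Fin n → ℂ) :
    star x ⬝ᵥ (A *ᵥ x) =
      ∑ j, (hA.eigenvalues j : ℂ) *
        ((Complex.normSq ((star (hA.eigenvectorUnitary : Matrix (Fin n) (Fin n) ℂ) *ᵥ x) j) : ℂ)) := by
  set U : Matrix (Fin n) (Fin n) ℂ := (hA.eigenvectorUnitary : Matrix (Fin n) (Fin n) ℂ) with hU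
  set y := star U *ᵥ x with hy
  conv_lhs => rw [hA.spectral_theorem, Unitary.conjStarAlgAut_apply]
  rw [← mulVec_mulVec, ← mulVec_mulVec, dotProduct_mulVec]
  have h1 : star x ᵥ* U = star y := by
    rw [hy, star_mulVec, ← Matrix.star_eq_conjTranspose, star_star]
  rw [h1]
  rw [show (Matrix.diagonal (RCLike.ofReal ∘ hA.eigenvalues) *ᵥ star U *ᵥ x)
    = (Matrix.diagonal (RCLike.ofReal ∘ hA.eigenvalues) *ᵥ y) from rfl]
  simp only [dotProduct, mulVec_diagonal, Pi.star_apply, Function.comp_apply]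
  refine Finset.sum_congr rfl fun j _ => ?_
  simp only [aux_rc_eq]
  rw [Complex.star_def, Complex.normSq_eq_conj_mul_self]
  ring

theorem aux_selfdot {n : ℕ} (v : Fin n → ℂ) :
    star v ⬝ᵥ v = ((∑ j, Complex.normSq (v j) : ℝ) : ℂ) := by
  rw [dotProduct]
  push_cast
  refine Finset.sum_congr rfl fun j _ => ?_
  rw [Pi.star_apply, Complex.star_def, Complex.normSq_eq_conj_mul_self]

theorem aux_norm_pres {n : ℕ} (U : Matrix (Fin n) (Fin n) ℂ) (h1 : U * star U = 1)
    (x : Fin n → ℂ) :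
    ∑ j, Complex.normSq ((star U *ᵥ x) j) = ∑ j, Complex.normSq (x j) := by
  have key : star (star U *ᵥ x) ⬝ᵥ (star U *ᵥ x) = star x ⬝ᵥ x := by
    rw [star_mulVec, ← Matrix.star_eq_conjTranspose, star_star, dotProduct_mulVec,
      vecMul_vecMul, h1, vecMul_one]
  rw [aux_selfdot, aux_selfdot] at key
  exact_mod_cast key

noncomputable def auxCoordZero {n : ℕ} (S : Finset (Fin n)) : Submodule ℂ (Fin n → ℂ) where
  carrier := {x | ∀ j ∉ S, x j = 0}
  add_mem' := by intro x y hx hy j hj; simp [hx j hj, hy j hj]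
  zero_mem' := by intro j hj; rfl
  smul_mem' := by intro c x hx j hj; simp [hx j hj]

theorem auxCoordZero_mem {n : ℕ} {S : Finset (Fin n)} {x : Fin n → ℂ} :
    x ∈ auxCoordZero S ↔ ∀ j ∉ S, x j = 0 := Iff.rfl

theorem auxCoordZero_finrank {n : ℕ} (S : Finset (Fin n)) :
    Module.finrank ℂ (auxCoordZero S) = S.card := by
  classical
  let f : (Fin n → ℂ) →ₗ[ℂ] ({j : Fin n // j ∉ S} → ℂ) :=
    LinearMap.pi (fun j => LinearMap.proj j.val)
  have hker : LinearMap.ker f = auxCoordZero S := by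
    ext x
    simp only [LinearMap.mem_ker, auxCoordZero_mem]
    constructor
    · intro h j hj
      exact congr_fun h ⟨j, hj⟩
    · intro h
      funext j
      exact h j.val j.prop
  have hsurj : Function.Surjective f := by
    intro g
    refine ⟨fun j => if h : j ∈ S then 0 else g ⟨j, h⟩, ?_⟩
    funext j
    simp [f, LinearMap.pi_apply, j.prop]
  have h1 := LinearMap.finrank_range_add_finrank_ker f
  rw [LinearMap.range_eq_top.mpr hsurj, hker] at h1
  rw [finrank_top] at h1
  rw [Module.finrank_pi, Module.finrank_pi] at h1
  have hcard : Fintype.card {j : Fin n // j ∉ S} = n - S.card := by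
    rw [Fintype.card_subtype]
    have : univ.filter (fun j => j ∉ S) = Sᶜ := by
      ext j; simp
    rw [this, Finset.card_compl, Fintype.card_fin]
  rw [hcard, Fintype.card_fin] at h1
  have h2 := S.card_le_univ
  rw [Fintype.card_fin] at h2
  omega

theorem aux_card_filter {n : ℕ} (f g : Fin n → ℝ) (p : ℝ → Prop) [DecidablePred p]
    (h : Multiset.map f Finset.univ.val = Multiset.map g Finset.univ.val) :
    (univ.filter (fun j => p (f j))).card = (univ.filter (fun j => p (g j))).card := by
  have key : ∀ u : Fin n → ℝ, (univ.filter (fun j => p (u j))).card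
      = Multiset.countP p (Multiset.map u Finset.univ.val) := by
    intro u
    rw [Multiset.countP_map]
    rw [Finset.card_filter]
    simp [Multiset.countP_eq_card_filter, Finset.filter_val, Finset.card]
  rw [key f, key g, h]

theorem aux_weyl {n : ℕ} {A B : Matrix (Fin n) (Fin n) ℂ} (hA : A.IsHermitian)
    (hB : B.IsHermitian)
    (hAB : (B - A).PosSemidef) {a b : Fin n → ℝ} (ha : Antitone a) (hb : Antitone b)
    (hma : Multiset.map a Finset.univ.val = Multiset.map hA.eigenvalues Finset.univ.val)
    (hmb : Multiset.map b Finset.univ.val = Multiset.map hB.eigenvalues Finset.univ.val)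
    (i : Fin n) : a i ≤ b i := by
  classical
  set UA : Matrix (Fin n) (Fin n) ℂ := (hA.eigenvectorUnitary : Matrix (Fin n) (Fin n) ℂ) with hUA
  set UB : Matrix (Fin n) (Fin n) ℂ := (hB.eigenvectorUnitary : Matrix (Fin n) (Fin n) ℂ) with hUB
  have hA1 : UA * star UA = 1 := Matrix.mem_unitaryGroup_iff.mp hA.eigenvectorUnitary.2
  have hA2 : star UA * UA = 1 := Matrix.mem_unitaryGroup_iff'.mp hA.eigenvectorUnitary.2
  have hB1 : UB * star UB = 1 := Matrix.mem_unitaryGroup_iff.mp hB.eigenvectorUnitary.2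
  have hB2 : star UB * UB = 1 := Matrix.mem_unitaryGroup_iff'.mp hB.eigenvectorUnitary.2
  set SA : Finset (Fin n) := univ.filter (fun j => a i ≤ hA.eigenvalues j) with hSA
  set SB : Finset (Fin n) := univ.filter (fun j => hB.eigenvalues j ≤ b i) with hSB
  let eA : (Fin n → ℂ) ≃ₗ[ℂ] (Fin n → ℂ) :=
    LinearEquiv.ofLinear (mulVecLin (star UA)) (mulVecLin UA)
      (by rw [← mulVecLin_mul, hA2, mulVecLin_one]) (by rw [← mulVecLin_mul, hA1, mulVecLin_one])
  let eB : (Fin n → ℂ) ≃ₗ[ℂ] (Fin n → ℂ) :=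
    LinearEquiv.ofLinear (mulVecLin (star UB)) (mulVecLin UB)
      (by rw [← mulVecLin_mul, hB2, mulVecLin_one]) (by rw [← mulVecLin_mul, hB1, mulVecLin_one])
  set VA := Submodule.comap (eA : (Fin n → ℂ) →ₗ[ℂ] (Fin n → ℂ)) (auxCoordZero SA) with hVA
  set VB := Submodule.comap (eB : (Fin n → ℂ) →ₗ[ℂ] (Fin n → ℂ)) (auxCoordZero SB) with hVB
  have hrA : Module.finrank ℂ VA = SA.card := by
    rw [hVA, Submodule.comap_equiv_eq_map_symm, LinearEquiv.finrank_map_eq, auxCoordZero_finrank]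
  have hrB : Module.finrank ℂ VB = SB.card := by
    rw [hVB, Submodule.comap_equiv_eq_map_symm, LinearEquiv.finrank_map_eq, auxCoordZero_finrank]
  have hcardA : (i : ℕ) + 1 ≤ SA.card := by
    rw [hSA, aux_card_filter hA.eigenvalues a (fun r => a i ≤ r) hma.symm]
    calc (i:ℕ) + 1 = (Finset.Iic i).card := (Fin.card_Iic i).symm
    _ ≤ _ := Finset.card_le_card (by
        intro j hj
        simp only [Finset.mem_Iic] at hj
        simp only [Finset.mem_filter, Finset.mem_univ, true_and]
        exact ha hj)
  have hcardB : n - (i : ℕ) ≤ SB.card := by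
    rw [hSB, aux_card_filter hB.eigenvalues b (fun r => r ≤ b i) hmb.symm]
    calc n - (i:ℕ) = (Finset.Ici i).card := (Fin.card_Ici i).symm
    _ ≤ _ := Finset.card_le_card (by
        intro j hj
        simp only [Finset.mem_Ici] at hj
        simp only [Finset.mem_filter, Finset.mem_univ, true_and]
        exact hb hj)
  have hdim : 0 < Module.finrank ℂ (VA ⊓ VB : Submodule ℂ (Fin n → ℂ)) := by
    have hsum := Submodule.finrank_sup_add_finrank_inf_eq VA VB
    have h1 : Module.finrank ℂ (VA ⊔ VB : Submodule ℂ (Fin n → ℂ)) ≤ n := by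
      refine le_trans (Submodule.finrank_le _) ?_
      simp [Module.finrank_pi]
    have h2 : (i : ℕ) < n := i.isLt
    omega
  have hne : (VA ⊓ VB : Submodule ℂ (Fin n → ℂ)) ≠ ⊥ := by
    intro h
    rw [h, finrank_bot] at hdim
    omega
  obtain ⟨x, hxmem, hxne⟩ := (Submodule.ne_bot_iff _).mp hne
  set yA := star UA *ᵥ x with hyA
  set yB := star UB *ᵥ x with hyB
  have hxA : ∀ j ∉ SA, yA j = 0 := hxmem.1
  have hxB : ∀ j ∉ SB, yB j = 0 := hxmem.2
  set s := ∑ j, Complex.normSq (x j) with hs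
  have hsA : ∑ j, Complex.normSq (yA j) = s := aux_norm_pres UA hA1 x
  have hsB : ∑ j, Complex.normSq (yB j) = s := aux_norm_pres UB hB1 x
  have hspos : 0 < s := by
    obtain ⟨j, hj⟩ := Function.ne_iff.mp hxne
    refine lt_of_lt_of_le (Complex.normSq_pos.mpr hj) ?_
    exact Finset.single_le_sum (fun j _ => Complex.normSq_nonneg (x j)) (Finset.mem_univ j)
  have hreA : star x ⬝ᵥ (A *ᵥ x) = ((∑ j, hA.eigenvalues j * Complex.normSq (yA j) : ℝ) : ℂ) := by
    rw [aux_quad hA x]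
    push_cast
    rfl
  have hreB : star x ⬝ᵥ (B *ᵥ x) = ((∑ j, hB.eigenvalues j * Complex.normSq (yB j) : ℝ) : ℂ) := by
    rw [aux_quad hB x]
    push_cast
    rfl
  have hgeA : a i * s ≤ ∑ j, hA.eigenvalues j * Complex.normSq (yA j) := by
    rw [← hsA, Finset.mul_sum]
    refine Finset.sum_le_sum fun j _ => ?_
    by_cases hj : j ∈ SA
    · have := (Finset.mem_filter.mp hj).2
      exact mul_le_mul_of_nonneg_right this (Complex.normSq_nonneg _)
    · rw [hxA j hj]
      simp
  have hleB : ∑ j, hB.eigenvalues j * Complex.normSq (yB j) ≤ b i * s := by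
    rw [← hsB, Finset.mul_sum]
    refine Finset.sum_le_sum fun j _ => ?_
    by_cases hj : j ∈ SB
    · have := (Finset.mem_filter.mp hj).2
      exact mul_le_mul_of_nonneg_right this (Complex.normSq_nonneg _)
    · rw [hxB j hj]
      simp
  have hpsd := hAB.dotProduct_mulVec_nonneg x
  rw [Matrix.sub_mulVec, dotProduct_sub, hreA, hreB] at hpsd
  rw [sub_nonneg] at hpsd
  have hmid : (∑ j, hA.eigenvalues j * Complex.normSq (yA j))
      ≤ ∑ j, hB.eigenvalues j * Complex.normSq (yB j) := by
    exact_mod_cast hpsd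
  have hfin := le_trans (le_trans hgeA hmid) hleB
  exact le_of_mul_le_mul_right (by linarith [hfin]) hspos

theorem aux_diag_shift {n : ℕ} (U : Matrix (Fin n) (Fin n) ℂ) (h1 : U * star U = 1)
    (d : Fin n → ℝ) (c : ℝ) :
    U * Matrix.diagonal (fun j => ((d j : ℝ) : ℂ)) * star U - Matrix.diagonal (fun _ => (c : ℂ))
      = U * Matrix.diagonal (fun j => ((d j - c : ℝ) : ℂ)) * star U := by
  have hconst : U * Matrix.diagonal (fun _ : Fin n => (c : ℂ)) * star U
      = Matrix.diagonal (fun _ : Fin n => (c : ℂ)) := by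
    have hd1 : Matrix.diagonal (fun _ : Fin n => (c : ℂ)) = (c : ℂ) • (1 : Matrix (Fin n) (Fin n) ℂ) := by
      ext i j
      by_cases h : i = j <;> simp [Matrix.diagonal_apply, Matrix.one_apply, h]
    rw [hd1, Matrix.mul_smul, Matrix.mul_one, Matrix.smul_mul, h1]
  conv_lhs => rw [← hconst]
  rw [← Matrix.sub_mul, ← Matrix.mul_sub, Matrix.diagonal_sub]
  congr 2
  funext j
  push_cast
  ring

theorem aux_key {n : ℕ} (X Y : Matrix (Fin n) (Fin n) ℂ)
    (hX : X.IsHermitian) (hY : Y.IsHermitian) (hXY : (X - Y).IsHermitian)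
    (ξ η ζ : Fin n → ℝ) (hξa : Antitone ξ) (hηa : Antitone η)
    (hξ : Multiset.map ξ Finset.univ.val = Multiset.map hX.eigenvalues Finset.univ.val)
    (hη : Multiset.map η Finset.univ.val = Multiset.map hY.eigenvalues Finset.univ.val)
    (hζ : Multiset.map ζ Finset.univ.val = Multiset.map hXY.eigenvalues Finset.univ.val)
    (c : ℝ) :
    ∑ i, max (ξ i - η i - c) 0 ≤ ∑ i, max (ζ i - c) 0 := by
  classical
  set U : Matrix (Fin n) (Fin n) ℂ := (hXY.eigenvectorUnitary : Matrix (Fin n) (Fin n) ℂ) with hU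
  set μ : Fin n → ℝ := hXY.eigenvalues with hμ
  have hU1 : U * star U = 1 := Matrix.mem_unitaryGroup_iff.mp hXY.eigenvectorUnitary.2
  have hU2 : star U * U = 1 := Matrix.mem_unitaryGroup_iff'.mp hXY.eigenvectorUnitary.2
  set D : Fin n → ℝ := fun j => max (μ j - c) 0 with hD
  set P : Matrix (Fin n) (Fin n) ℂ := U * Matrix.diagonal (fun j => ((D j : ℝ) : ℂ)) * star U
    with hP
  have hdiagpsd : (Matrix.diagonal (fun j => ((D j : ℝ) : ℂ))).PosSemidef := by
    rw [Matrix.posSemidef_diagonal_iff]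
    intro j
    rw [Complex.zero_le_real]
    exact le_max_right _ 0
  have hPpsd : P.PosSemidef := hdiagpsd.mul_mul_conjTranspose_same U
  have hPH : P.IsHermitian := hPpsd.1
  set W : Matrix (Fin n) (Fin n) ℂ := Y + P with hW
  have hWH : W.IsHermitian := hY.add hPH
  obtain ⟨w, hwa, hwm⟩ := aux_exists_antitone hWH.eigenvalues
  -- spectral form of X - Y
  have hZspec : X - Y = U * Matrix.diagonal (fun j => ((μ j : ℝ) : ℂ)) * star U := by
    have := hXY.spectral_theorem; rw [Unitary.conjStarAlgAut_apply] at this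
    exact this
  -- the shifted matrix A' and its eigenvalue multiset
  set A' : Matrix (Fin n) (Fin n) ℂ := X - Matrix.diagonal (fun _ => (c : ℂ)) with hA'
  have hdiagH : (Matrix.diagonal (fun _ : Fin n => (c : ℂ))).IsHermitian := by
    apply Matrix.isHermitian_diagonal_of_self_adjoint
    funext j
    exact Complex.conj_ofReal c
  have hA'H : A'.IsHermitian := hX.sub hdiagH
  have hUX1 : (hX.eigenvectorUnitary : Matrix (Fin n) (Fin n) ℂ)
      * star (hX.eigenvectorUnitary : Matrix (Fin n) (Fin n) ℂ) = 1 :=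
    Matrix.mem_unitaryGroup_iff.mp hX.eigenvectorUnitary.2
  have hUX2 : star (hX.eigenvectorUnitary : Matrix (Fin n) (Fin n) ℂ)
      * (hX.eigenvectorUnitary : Matrix (Fin n) (Fin n) ℂ) = 1 :=
    Matrix.mem_unitaryGroup_iff'.mp hX.eigenvectorUnitary.2
  have hA'spec : A' = (hX.eigenvectorUnitary : Matrix (Fin n) (Fin n) ℂ)
      * Matrix.diagonal (fun j => ((hX.eigenvalues j - c : ℝ) : ℂ))
      * star (hX.eigenvectorUnitary : Matrix (Fin n) (Fin n) ℂ) := by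
    rw [hA', ← aux_diag_shift _ hUX1 hX.eigenvalues c]
    congr 1
    have := hX.spectral_theorem; rw [Unitary.conjStarAlgAut_apply] at this
    exact this
  have hA'm : Multiset.map hA'H.eigenvalues Finset.univ.val
      = Multiset.map (fun i => ξ i - c) Finset.univ.val := by
    rw [aux_eig_multiset hA'H _ hUX1 hUX2 _ hA'spec]
    have h1 : Multiset.map (fun i => ξ i - c) Finset.univ.val
        = Multiset.map (fun t => t - c) (Multiset.map ξ Finset.univ.val) := by
      rw [Multiset.map_map]; rfl
    have h2 : Multiset.map (fun j => hX.eigenvalues j - c) Finset.univ.val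
        = Multiset.map (fun t => t - c) (Multiset.map hX.eigenvalues Finset.univ.val) := by
      rw [Multiset.map_map]; rfl
    rw [h2, ← hξ, ← h1]
  -- Weyl 1 : ξ i - c ≤ w i
  have hpsd1 : (W - A').PosSemidef := by
    have hWA : W - A' = U * Matrix.diagonal (fun j => ((D j - (μ j - c) : ℝ) : ℂ)) * star U := by
      have e1 : W - A' = P - ((X - Y) - Matrix.diagonal (fun _ => (c : ℂ))) := by
        rw [hW, hA']
        abel
      rw [e1, hZspec, aux_diag_shift _ hU1 μ c, hP, ← Matrix.sub_mul, ← Matrix.mul_sub,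
        Matrix.diagonal_sub]
      congr 2
      funext j
      push_cast
      ring
    rw [hWA]
    refine Matrix.PosSemidef.mul_mul_conjTranspose_same ?_ U
    rw [Matrix.posSemidef_diagonal_iff]
    intro j
    rw [Complex.zero_le_real]
    have := le_max_left (μ j - c) 0
    simp only [hD]
    linarith
  have hweyl1 : ∀ i, ξ i - c ≤ w i := by
    intro i
    refine aux_weyl hA'H hWH hpsd1 (a := fun i => ξ i - c) (b := w)
      (fun i j hij => by have := hξa hij; simp only []; linarith) hwa
      hA'm.symm hwm i
  -- Weyl 2 : η i ≤ w i
  have hpsd2 : (W - Y).PosSemidef := by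
    have : W - Y = P := by rw [hW]; abel
    rw [this]; exact hPpsd
  have hweyl2 : ∀ i, η i ≤ w i := fun i =>
    aux_weyl hY hWH hpsd2 hηa hwa hη hwm i
  -- trace identity
  have hPtr : P.trace = ((∑ j, D j : ℝ) : ℂ) := by
    rw [hP, Matrix.trace_mul_comm, ← Matrix.mul_assoc, hU2, Matrix.one_mul,
      Matrix.trace_diagonal]
    push_cast
    rfl
  have htr : ∑ i, w i = ∑ i, η i + ∑ j, D j := by
    have h1 : W.trace = Y.trace + P.trace := Matrix.trace_add Y P
    rw [aux_trace_eig hWH, aux_trace_eig hY, hPtr] at h1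
    have h2 : ∑ i, hWH.eigenvalues i = ∑ i, hY.eigenvalues i + ∑ j, D j := by
      exact_mod_cast h1
    rw [aux_sum_transport' hwm, aux_sum_transport' hη, h2]
  -- conclusion
  have hsum1 : ∑ i, max (ξ i - η i - c) 0 ≤ ∑ i, (w i - η i) := by
    refine Finset.sum_le_sum fun i _ => ?_
    exact max_le (by linarith [hweyl1 i]) (by linarith [hweyl2 i])
  have hsum2 : ∑ i, (w i - η i) = ∑ j, D j := by
    rw [Finset.sum_sub_distrib, htr]
    ring
  have hsum3 : ∑ j, D j = ∑ i, max (ζ i - c) 0 := by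
    exact aux_sum_transport hζ.symm (fun t => max (t - c) 0) |>.symm ▸
      (aux_sum_transport hζ.symm (fun t => max (t - c) 0)).symm
  linarith [hsum1, hsum2.le, hsum3.le, hsum2.ge, hsum3.ge]

/-- (Lidskii/Mirsky-type eigenvalue inequality) For Hermitian `X`, `Y` with eigenvalues
`ξ₁ ≥ ⋯ ≥ ξ_n`, `η₁ ≥ ⋯ ≥ η_n`, eigenvalues `ζ₁ ≥ ⋯ ≥ ζ_n` of `X - Y`, and with
`d` the non-increasing rearrangement of the numbers `ξᵢ - ηᵢ`, one has
`∑_{i<k} dᵢ ≤ ∑_{i<k} ζᵢ` for every `k ≤ n`. -/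
theorem lidskii_mirsky_partial_sums {n : ℕ} (X Y : Matrix (Fin n) (Fin n) ℂ)
    (hX : X.IsHermitian) (hY : Y.IsHermitian) (hXY : (X - Y).IsHermitian)
    (ξ η ζ d : Fin n → ℝ)
    (hξa : Antitone ξ) (hηa : Antitone η) (hζa : Antitone ζ) (hda : Antitone d)
    (hξ : Multiset.map ξ Finset.univ.val = Multiset.map hX.eigenvalues Finset.univ.val)
    (hη : Multiset.map η Finset.univ.val = Multiset.map hY.eigenvalues Finset.univ.val)
    (hζ : Multiset.map ζ Finset.univ.val = Multiset.map hXY.eigenvalues Finset.univ.val)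
    (hd : Multiset.map d Finset.univ.val =
      Multiset.map (fun i => ξ i - η i) Finset.univ.val) :
    ∀ k : ℕ, k ≤ n →
      ∑ i ∈ Finset.univ.filter (fun i : Fin n => (i : ℕ) < k), d i ≤
        ∑ i ∈ Finset.univ.filter (fun i : Fin n => (i : ℕ) < k), ζ i := by
  intro k hk
  rcases Nat.eq_zero_or_pos k with hk0 | hkpos
  · subst hk0
    simp
  · set kk : Fin n := ⟨k - 1, by omega⟩ with hkk
    set c : ℝ := ζ kk with hc
    have key := aux_key X Y hX hY hXY ξ η ζ hξa hηa hξ hη hζ c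
    set F : Finset (Fin n) := Finset.univ.filter (fun i : Fin n => (i : ℕ) < k) with hF
    have h1 : ∑ i ∈ F, (d i - c) ≤ ∑ i ∈ F, (ζ i - c) := by
      calc ∑ i ∈ F, (d i - c) ≤ ∑ i ∈ F, max (d i - c) 0 :=
            Finset.sum_le_sum fun i _ => le_max_left _ _
        _ ≤ ∑ i, max (d i - c) 0 :=
            Finset.sum_le_sum_of_subset_of_nonneg (Finset.subset_univ F)
              (fun i _ _ => le_max_right _ 0)
        _ = ∑ i, max (ξ i - η i - c) 0 := by
            have := aux_sum_transport hd (fun t => max (t - c) 0)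
            simpa using this
        _ ≤ ∑ i, max (ζ i - c) 0 := key
        _ = ∑ i ∈ F, (ζ i - c) := by
            rw [← Finset.sum_filter_add_sum_filter_not Finset.univ
              (fun i : Fin n => (i : ℕ) < k) (fun i => max (ζ i - c) 0)]
            have e1 : ∑ i ∈ F, max (ζ i - c) 0 = ∑ i ∈ F, (ζ i - c) := by
              refine Finset.sum_congr rfl fun i hi => ?_
              have hik : (i : ℕ) < k := (Finset.mem_filter.mp hi).2
              have hle : i ≤ kk := by
                rw [Fin.le_def]
                simp only [hkk]
                omega
              have : c ≤ ζ i := hζa hle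
              exact max_eq_left (by linarith)
            have e2 : ∑ i ∈ Finset.univ.filter (fun i : Fin n => ¬ (i : ℕ) < k),
                max (ζ i - c) 0 = 0 := by
              refine Finset.sum_eq_zero fun i hi => ?_
              have hik : ¬ (i : ℕ) < k := (Finset.mem_filter.mp hi).2
              have hle : kk ≤ i := by
                rw [Fin.le_def]
                simp only [hkk]
                omega
              have : ζ i ≤ c := hζa hle
              exact max_eq_right (by linarith)
            rw [e1, e2, add_zero]
    rw [Finset.sum_sub_distrib, Finset.sum_sub_distrib] at h1
    linarith
end

section
/- (Mirsky, 2-norm case) Let A and B be n×n complex matrices with singular values ρ₁ ≥ … ≥ ρ_n and σ₁ ≥ … ≥ σ_n respectively, listed in non-increasing order with multiplicity. Then ‖A − B‖₂ ≥ max_{1 ≤ k ≤ n} |ρ_k − σ_k|, i.e. the spectral norm of A − B dominates the maximal difference between correspondingly ordered singular values. -/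
open Matrix BigOperators

/-- The singular values of a complex square matrix `M`: the nonnegative square roots of the
eigenvalues of `MᴴM`. -/
noncomputable def singularValuesC {n : ℕ} (M : Matrix (Fin n) (Fin n) ℂ) : Fin n → ℝ :=
  fun i => Real.sqrt ((Matrix.isHermitian_conjTranspose_mul_self M).eigenvalues i)

/-- The spectral (operator 2-) norm of a complex square matrix. -/
noncomputable def spectralNormC {n : ℕ} (A : Matrix (Fin n) (Fin n) ℂ) : ℝ :=
  ‖Matrix.toEuclideanCLM (𝕜 := ℂ) A‖

variable {n : ℕ}


lemma clm_eigen {M : Matrix (Fin n) (Fin n) ℂ} (hM : M.IsHermitian) (j : Fin n) :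
    Matrix.toEuclideanCLM (𝕜 := ℂ) M (hM.eigenvectorBasis j) =
      (hM.eigenvalues j : ℂ) • hM.eigenvectorBasis j := by
  apply WithLp.ofLp_injective 2
  rw [Matrix.ofLp_toEuclideanCLM]
  have h := hM.mulVec_eigenvectorBasis j
  simp only [WithLp.ofLp_smul]
  erw [h]; ext i; simp [Complex.real_smul]

lemma repr_clm {M : Matrix (Fin n) (Fin n) ℂ} (hM : M.IsHermitian)
    (x : EuclideanSpace ℂ (Fin n)) (i : Fin n) :
    hM.eigenvectorBasis.repr (Matrix.toEuclideanCLM (𝕜 := ℂ) M x) i =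
      (hM.eigenvalues i : ℂ) * hM.eigenvectorBasis.repr x i := by
  set T := Matrix.toEuclideanCLM (𝕜 := ℂ) M with hT
  have hsa : ContinuousLinearMap.adjoint T = T := by
    rw [← ContinuousLinearMap.star_eq_adjoint, hT, ← map_star, star_eq_conjTranspose, hM.eq]
  rw [OrthonormalBasis.repr_apply_apply, OrthonormalBasis.repr_apply_apply,
    ← hsa, ContinuousLinearMap.adjoint_inner_right, clm_eigen hM i,
    inner_smul_left]
  simp

lemma quad_re {M : Matrix (Fin n) (Fin n) ℂ} (hM : M.IsHermitian)
    (x : EuclideanSpace ℂ (Fin n)) :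
    Complex.re (inner ℂ x (Matrix.toEuclideanCLM (𝕜 := ℂ) M x) : ℂ) =
      ∑ i, hM.eigenvalues i * ‖hM.eigenvectorBasis.repr x i‖ ^ 2 := by
  rw [← hM.eigenvectorBasis.repr.inner_map_map x (Matrix.toEuclideanCLM (𝕜 := ℂ) M x)]
  rw [PiLp.inner_apply]
  simp only [repr_clm hM, RCLike.inner_apply]
  rw [Complex.re_sum]
  refine Finset.sum_congr rfl fun i _ => ?_
  simp only [Complex.mul_re, Complex.mul_im, Complex.conj_re, Complex.conj_im,
    Complex.ofReal_re, Complex.ofReal_im, Complex.sq_norm,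
    Complex.normSq_apply]
  ring

lemma norm_sq_repr {E : Type*} [NormedAddCommGroup E] [InnerProductSpace ℂ E]
    (b : OrthonormalBasis (Fin n) ℂ E) (x : E) :
    ‖x‖ ^ 2 = ∑ i, ‖b.repr x i‖ ^ 2 := by
  rw [← b.repr.norm_map x, EuclideanSpace.norm_eq, Real.sq_sqrt]
  positivity

lemma repr_eq_zero_of_mem_span {E : Type*} [NormedAddCommGroup E] [InnerProductSpace ℂ E]
    (b : OrthonormalBasis (Fin n) ℂ E) (S : Finset (Fin n)) {x : E}
    (hx : x ∈ Submodule.span ℂ (b '' ↑S)) {i : Fin n} (hi : i ∉ S) :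
    b.repr x i = 0 := by
  have hle : Submodule.span ℂ (b '' ↑S) ≤
      LinearMap.ker ((innerSL ℂ (b i)).toLinearMap) := by
    rw [Submodule.span_le]
    rintro y ⟨j, hj, rfl⟩
    have hij : i ≠ j := by rintro rfl; exact hi hj
    simp only [SetLike.mem_coe, LinearMap.mem_ker, ContinuousLinearMap.coe_coe, innerSL_apply_apply]
    rw [orthonormal_iff_ite.mp b.orthonormal]
    simp [hij]
  have := hle hx
  rw [LinearMap.mem_ker] at this
  rw [OrthonormalBasis.repr_apply_apply]
  simpa using this



lemma norm_clm_sq (A : Matrix (Fin n) (Fin n) ℂ) (x : EuclideanSpace ℂ (Fin n)) :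
    ‖Matrix.toEuclideanCLM (𝕜 := ℂ) A x‖ ^ 2 =
      Complex.re (inner ℂ x (Matrix.toEuclideanCLM (𝕜 := ℂ) (Aᴴ * A) x) : ℂ) := by
  rw [_root_.map_mul, show Aᴴ = star A from rfl, map_star, ContinuousLinearMap.mul_apply,
    ContinuousLinearMap.star_eq_adjoint, ContinuousLinearMap.adjoint_inner_right]
  exact (inner_self_eq_norm_sq (𝕜 := ℂ) _).symm


lemma sq_le_sq_imp {a b : ℝ} (ha : 0 ≤ a) (hb : 0 ≤ b) (h : a ^ 2 ≤ b ^ 2) : a ≤ b := by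
  nlinarith

lemma le_norm_apply_of_mem_span (A : Matrix (Fin n) (Fin n) ℂ) (c : ℝ) (hc : 0 ≤ c)
    (S : Finset (Fin n))
    (h : ∀ i ∈ S, c ^ 2 ≤ (Matrix.isHermitian_conjTranspose_mul_self A).eigenvalues i)
    {x : EuclideanSpace ℂ (Fin n)}
    (hx : x ∈ Submodule.span ℂ
      ((Matrix.isHermitian_conjTranspose_mul_self A).eigenvectorBasis '' ↑S)) :
    c * ‖x‖ ≤ ‖Matrix.toEuclideanCLM (𝕜 := ℂ) A x‖ := by
  have hM := Matrix.isHermitian_conjTranspose_mul_self A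
  have key : (c * ‖x‖) ^ 2 ≤ ‖Matrix.toEuclideanCLM (𝕜 := ℂ) A x‖ ^ 2 := by
    rw [norm_clm_sq, quad_re (Matrix.isHermitian_conjTranspose_mul_self A), mul_pow,
      norm_sq_repr (Matrix.isHermitian_conjTranspose_mul_self A).eigenvectorBasis x,
      Finset.mul_sum]
    apply Finset.sum_le_sum; intro i _
    by_cases hi : i ∈ S
    · exact mul_le_mul_of_nonneg_right (h i hi) (by positivity)
    · rw [repr_eq_zero_of_mem_span _ S hx hi]; simp
  exact sq_le_sq_imp (by positivity) (norm_nonneg _) key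

lemma norm_apply_le_of_mem_span (B : Matrix (Fin n) (Fin n) ℂ) (c : ℝ)
    (S : Finset (Fin n))
    (h : ∀ i ∈ S, (Matrix.isHermitian_conjTranspose_mul_self B).eigenvalues i ≤ c ^ 2)
    {x : EuclideanSpace ℂ (Fin n)} (hc : 0 ≤ c)
    (hx : x ∈ Submodule.span ℂ
      ((Matrix.isHermitian_conjTranspose_mul_self B).eigenvectorBasis '' ↑S)) :
    ‖Matrix.toEuclideanCLM (𝕜 := ℂ) B x‖ ≤ c * ‖x‖ := by
  have key : ‖Matrix.toEuclideanCLM (𝕜 := ℂ) B x‖ ^ 2 ≤ (c * ‖x‖) ^ 2 := by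
    rw [norm_clm_sq, quad_re (Matrix.isHermitian_conjTranspose_mul_self B), mul_pow,
      norm_sq_repr (Matrix.isHermitian_conjTranspose_mul_self B).eigenvectorBasis x,
      Finset.mul_sum]
    apply Finset.sum_le_sum; intro i _
    by_cases hi : i ∈ S
    · exact mul_le_mul_of_nonneg_right (h i hi) (by positivity)
    · rw [repr_eq_zero_of_mem_span _ S hx hi]; simp
  exact sq_le_sq_imp (norm_nonneg _) (by positivity) key


lemma card_filter_ge {f ρ : Fin n → ℝ} (hρa : Antitone ρ)
    (hρ : Multiset.map ρ Finset.univ.val = Multiset.map f Finset.univ.val) (k : Fin n) :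
    (k : ℕ) + 1 ≤ (Finset.univ.filter fun i => ρ k ≤ f i).card := by
  have hcount : ∀ g : Fin n → ℝ, (Finset.univ.filter fun i => ρ k ≤ g i).card =
      Multiset.countP (fun x => ρ k ≤ x) (Multiset.map g Finset.univ.val) := by
    intro g
    rw [Multiset.countP_map]
    rfl
  rw [hcount f, ← hρ, ← hcount ρ]
  calc (k : ℕ) + 1 = (Finset.Iic k).card := (Fin.card_Iic k).symm
    _ ≤ _ := Finset.card_le_card (by
        intro i hi
        simp only [Finset.mem_Iic] at hi
        simp only [Finset.mem_filter, Finset.mem_univ, true_and]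
        exact hρa hi)

lemma card_filter_le {g σ : Fin n → ℝ} (hσa : Antitone σ)
    (hσ : Multiset.map σ Finset.univ.val = Multiset.map g Finset.univ.val) (k : Fin n) :
    n - (k : ℕ) ≤ (Finset.univ.filter fun i => g i ≤ σ k).card := by
  have hcount : ∀ h : Fin n → ℝ, (Finset.univ.filter fun i => h i ≤ σ k).card =
      Multiset.countP (fun x => x ≤ σ k) (Multiset.map h Finset.univ.val) := by
    intro h
    rw [Multiset.countP_map]
    rfl
  rw [hcount g, ← hσ, ← hcount σ]
  calc n - (k : ℕ) = (Finset.Ici k).card := (Fin.card_Ici k).symm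
    _ ≤ _ := Finset.card_le_card (by
        intro i hi
        simp only [Finset.mem_Ici] at hi
        simp only [Finset.mem_filter, Finset.mem_univ, true_and]
        exact hσa hi)

lemma finrank_span_orthonormal {E : Type} [NormedAddCommGroup E] [InnerProductSpace ℂ E]
    (b : OrthonormalBasis (Fin n) ℂ E) (S : Finset (Fin n)) :
    Module.finrank ℂ (Submodule.span ℂ (b '' ↑S)) = S.card := by
  rw [Set.image_eq_range]
  have hli : LinearIndependent ℂ (fun x : ↥(↑S : Set (Fin n)) => b ↑x) :=
    (b.orthonormal.linearIndependent).comp _ Subtype.val_injective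
  rw [finrank_span_eq_card hli]
  simp

lemma sv_nonneg_of_mem {n : ℕ} {ρ : Fin n → ℝ} {A : Matrix (Fin n) (Fin n) ℂ}
    (hρ : Multiset.map ρ Finset.univ.val =
      Multiset.map (singularValuesC A) Finset.univ.val) (k : Fin n) : 0 ≤ ρ k := by
  have hmem : ρ k ∈ Multiset.map ρ Finset.univ.val :=
    Multiset.mem_map_of_mem ρ (Finset.mem_univ_val k)
  rw [hρ] at hmem
  obtain ⟨i, -, hi⟩ := Multiset.mem_map.mp hmem
  rw [← hi]
  exact Real.sqrt_nonneg _

lemma mirsky_key {n : ℕ} (A B : Matrix (Fin n) (Fin n) ℂ)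
    (ρ σ : Fin n → ℝ) (hρa : Antitone ρ) (hσa : Antitone σ)
    (hρ : Multiset.map ρ Finset.univ.val =
      Multiset.map (singularValuesC A) Finset.univ.val)
    (hσ : Multiset.map σ Finset.univ.val =
      Multiset.map (singularValuesC B) Finset.univ.val)
    (k : Fin n) : ρ k - σ k ≤ spectralNormC (A - B) := by
  classical
  have hρ0 : 0 ≤ ρ k := sv_nonneg_of_mem hρ k
  have hσ0 : 0 ≤ σ k := sv_nonneg_of_mem hσ k
  set hMA := Matrix.isHermitian_conjTranspose_mul_self A with hMAdef
  set hMB := Matrix.isHermitian_conjTranspose_mul_self B with hMBdef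
  set SA : Finset (Fin n) := Finset.univ.filter fun i => ρ k ≤ singularValuesC A i with hSA
  set SB : Finset (Fin n) := Finset.univ.filter fun i => singularValuesC B i ≤ σ k with hSB
  set V := Submodule.span ℂ (hMA.eigenvectorBasis '' ↑SA) with hV
  set W := Submodule.span ℂ (hMB.eigenvectorBasis '' ↑SB) with hW
  have hVrank : Module.finrank ℂ V = SA.card := finrank_span_orthonormal _ _
  have hWrank : Module.finrank ℂ W = SB.card := finrank_span_orthonormal _ _
  have hcardA : (k : ℕ) + 1 ≤ SA.card := card_filter_ge hρa hρ k
  have hcardB : n - (k : ℕ) ≤ SB.card := card_filter_le hσa hσ k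
  -- intersection is nontrivial
  have hsum := Submodule.finrank_sup_add_finrank_inf_eq V W
  have htop : Module.finrank ℂ (V ⊔ W : Submodule ℂ (EuclideanSpace ℂ (Fin n))) ≤ n := by
    have := Submodule.finrank_le (V ⊔ W)
    rwa [finrank_euclideanSpace_fin] at this
  have hk : (k : ℕ) < n := k.isLt
  have hpos : 0 < Module.finrank ℂ (V ⊓ W : Submodule ℂ (EuclideanSpace ℂ (Fin n))) := by
    omega
  have hneq : V ⊓ W ≠ ⊥ := by
    intro hbot
    rw [hbot, finrank_bot] at hpos
    exact lt_irrefl _ hpos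
  obtain ⟨x, hxVW, hx0⟩ := Submodule.exists_mem_ne_zero_of_ne_bot hneq
  have hxV : x ∈ V := hxVW.1
  have hxW : x ∈ W := hxVW.2
  have hAev : ∀ i ∈ SA, ρ k ^ 2 ≤ hMA.eigenvalues i := by
    intro i hi
    have hle : ρ k ≤ singularValuesC A i := (Finset.mem_filter.mp hi).2
    have hnn : 0 ≤ hMA.eigenvalues i :=
      Matrix.eigenvalues_conjTranspose_mul_self_nonneg A i
    calc ρ k ^ 2 ≤ singularValuesC A i ^ 2 := pow_le_pow_left₀ hρ0 hle 2
      _ = hMA.eigenvalues i := Real.sq_sqrt hnn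
  have hBev : ∀ i ∈ SB, hMB.eigenvalues i ≤ σ k ^ 2 := by
    intro i hi
    have hle : singularValuesC B i ≤ σ k := (Finset.mem_filter.mp hi).2
    have hnn : 0 ≤ hMB.eigenvalues i :=
      Matrix.eigenvalues_conjTranspose_mul_self_nonneg B i
    calc hMB.eigenvalues i = singularValuesC B i ^ 2 := (Real.sq_sqrt hnn).symm
      _ ≤ σ k ^ 2 := pow_le_pow_left₀ (Real.sqrt_nonneg _) hle 2
  have hA : ρ k * ‖x‖ ≤ ‖Matrix.toEuclideanCLM (𝕜 := ℂ) A x‖ :=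
    le_norm_apply_of_mem_span A (ρ k) hρ0 SA hAev hxV
  have hB : ‖Matrix.toEuclideanCLM (𝕜 := ℂ) B x‖ ≤ σ k * ‖x‖ :=
    norm_apply_le_of_mem_span B (σ k) SB hBev hσ0 hxW
  have hdiff : ‖Matrix.toEuclideanCLM (𝕜 := ℂ) A x - Matrix.toEuclideanCLM (𝕜 := ℂ) B x‖ ≤
      spectralNormC (A - B) * ‖x‖ := by
    have heq : Matrix.toEuclideanCLM (𝕜 := ℂ) A x - Matrix.toEuclideanCLM (𝕜 := ℂ) B x =
        Matrix.toEuclideanCLM (𝕜 := ℂ) (A - B) x := by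
      rw [map_sub]; rfl
    rw [heq]
    exact (Matrix.toEuclideanCLM (𝕜 := ℂ) (A - B)).le_opNorm x
  have htri := norm_sub_norm_le (Matrix.toEuclideanCLM (𝕜 := ℂ) A x)
    (Matrix.toEuclideanCLM (𝕜 := ℂ) B x)
  have hxpos : 0 < ‖x‖ := norm_pos_iff.mpr hx0
  nlinarith [hA, hB, hdiff, htri, hxpos]


/-- (Mirsky, 2-norm case) If `ρ` and `σ` are the singular values of `A` and `B` listed in
non-increasing order, then `‖A - B‖₂ ≥ |ρ_k - σ_k|` for every `k`. -/
theorem mirsky_spectral_norm {n : ℕ} (A B : Matrix (Fin n) (Fin n) ℂ)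
    (ρ σ : Fin n → ℝ) (hρa : Antitone ρ) (hσa : Antitone σ)
    (hρ : Multiset.map ρ Finset.univ.val =
      Multiset.map (singularValuesC A) Finset.univ.val)
    (hσ : Multiset.map σ Finset.univ.val =
      Multiset.map (singularValuesC B) Finset.univ.val) :
    ∀ k : Fin n, |ρ k - σ k| ≤ spectralNormC (A - B) := by
  intro k
  rw [abs_sub_le_iff]
  refine ⟨mirsky_key A B ρ σ hρa hσa hρ hσ k, ?_⟩
  have h := mirsky_key B A σ ρ hσa hρa hσ hρ k
  have hnorm : spectralNormC (B - A) = spectralNormC (A - B) := by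
    show ‖Matrix.toEuclideanCLM (𝕜 := ℂ) (B - A)‖ = ‖Matrix.toEuclideanCLM (𝕜 := ℂ) (A - B)‖
    rw [show B - A = -(A - B) by abel, map_neg, norm_neg]
  rwa [hnorm] at h
end

section
/- (Best approximation property of the unitary polar factor, 2-norm case) Let A ∈ ℂ^{n×n} and let A = UH be a polar decomposition with U unitary and H Hermitian positive semidefinite. Then for every unitary matrix Q ∈ ℂ^{n×n}: ‖A − U‖₂ ≤ ‖A − Q‖₂. That is, U minimizes the spectral-norm distance from A over all unitary matrices, and the minimal distance equals max_k |σ_k(A) − 1| where σ_k(A) are the singular values of A. -/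
open Matrix BigOperators
open scoped ComplexOrder InnerProductSpace

section PolarAux
variable {n : ℕ}

noncomputable def Matrix.PosSemidef.sqrt {M : Matrix (Fin n) (Fin n) ℂ} (hM : M.PosSemidef) :
    Matrix (Fin n) (Fin n) ℂ :=
  hM.1.eigenvectorUnitary.1 * diagonal ((↑) ∘ (√·) ∘ hM.1.eigenvalues) *
    (star hM.1.eigenvectorUnitary : Matrix (Fin n) (Fin n) ℂ)

open scoped MatrixOrder in
lemma Matrix.PosSemidef.sqrt_eq_cfc_sqrt {M : Matrix (Fin n) (Fin n) ℂ} (hM : M.PosSemidef) :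
    hM.sqrt = CFC.sqrt M := by
  rw [CFC.sqrt_eq_cfc, cfc_nnreal_eq_real _ M, hM.1.cfc_eq]
  simp only [Matrix.IsHermitian.cfc, Matrix.PosSemidef.sqrt, Unitary.conjStarAlgAut_apply]
  congr 3
  funext i
  simp [Real.coe_sqrt, max_eq_left (hM.eigenvalues_nonneg i)]

open scoped MatrixOrder in
lemma Matrix.PosSemidef.eq_sqrt_of_sq_eq {A B : Matrix (Fin n) (Fin n) ℂ} (hA : A.PosSemidef)
    (hB : B.PosSemidef) (hAB : A ^ 2 = B) : A = hB.sqrt := by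
  rw [hB.sqrt_eq_cfc_sqrt]
  exact (CFC.sqrt_unique (by rw [← sq]; exact hAB) hA.nonneg).symm

lemma sqrt_mulVec_eig {M : Matrix (Fin n) (Fin n) ℂ} (hM : M.PosSemidef) (j : Fin n) :
    hM.sqrt *ᵥ ⇑(hM.1.eigenvectorBasis j) =
      Real.sqrt (hM.1.eigenvalues j) • ⇑(hM.1.eigenvectorBasis j) := by
  rw [Matrix.PosSemidef.sqrt, ← Matrix.mulVec_mulVec, ← Matrix.mulVec_mulVec,
    Matrix.IsHermitian.star_eigenvectorUnitary_mulVec, Matrix.diagonal_mulVec_single]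
  funext i
  simp [Matrix.mulVec_single, mul_comm, Complex.real_smul]
  exact mul_comm _ _

lemma clm_apply_of_mulVec {M : Matrix (Fin n) (Fin n) ℂ} {x y : EuclideanSpace ℂ (Fin n)}
    (h : M *ᵥ (WithLp.equiv 2 _ x) = WithLp.equiv 2 _ y) :
    Matrix.toEuclideanCLM (𝕜 := ℂ) M x = y := by
  apply (WithLp.equiv 2 _).injective
  exact h

lemma norm_clm_unitary {Q : Matrix (Fin n) (Fin n) ℂ} (hQ : Qᴴ * Q = 1)
    (v : EuclideanSpace ℂ (Fin n)) :
    ‖Matrix.toEuclideanCLM (𝕜 := ℂ) Q v‖ = ‖v‖ := by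
  set f := Matrix.toEuclideanCLM (𝕜 := ℂ) (n := Fin n)
  have hadj : (f Q).adjoint = f Qᴴ := by
    rw [← ContinuousLinearMap.star_eq_adjoint, ← map_star]
    rfl
  have h1 : ⟪f Q v, f Q v⟫_ℂ = ⟪v, v⟫_ℂ := by
    rw [← ContinuousLinearMap.adjoint_inner_right (f Q) v (f Q v), hadj]
    have : f Qᴴ (f Q v) = v := by
      rw [← ContinuousLinearMap.comp_apply, ← ContinuousLinearMap.mul_def, ← _root_.map_mul, hQ,
        _root_.map_one, ContinuousLinearMap.one_apply]
    rw [this]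
  rw [@norm_eq_sqrt_re_inner ℂ, @norm_eq_sqrt_re_inner ℂ, h1]

end PolarAux

/-- (Best approximation property of the unitary polar factor, 2-norm case) If `A = U H` is a
polar decomposition, then `U` minimizes `‖A - Q‖₂` over all unitary `Q`, and the minimal
distance equals `max_k |σ_k(A) - 1|`. -/
theorem polar_factor_best_unitary_approximation {n : ℕ}
    (A U H : Matrix (Fin n) (Fin n) ℂ)
    (hU₁ : Uᴴ * U = 1) (hU₂ : U * Uᴴ = 1)
    (hH : H.PosSemidef) (hpolar : A = U * H) :
    (∀ Q : Matrix (Fin n) (Fin n) ℂ, Qᴴ * Q = 1 → Q * Qᴴ = 1 →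
        spectralNormC (A - U) ≤ spectralNormC (A - Q)) ∧
      spectralNormC (A - U) = ⨆ k, |singularValuesC A k - 1| := by
  set f := Matrix.toEuclideanCLM (𝕜 := ℂ) (n := Fin n) with hfdef
  have hAA : (Aᴴ * A).IsHermitian := Matrix.isHermitian_conjTranspose_mul_self A
  have hAApsd : (Aᴴ * A).PosSemidef := Matrix.posSemidef_conjTranspose_mul_self A
  set σ : Fin n → ℝ := singularValuesC A with hσdef
  set w : Fin n → EuclideanSpace ℂ (Fin n) := fun k => hAA.eigenvectorBasis k with hwdef
  have hσ0 : ∀ k, 0 ≤ σ k := fun k => Real.sqrt_nonneg _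
  have hwnorm : ∀ k, ‖w k‖ = 1 := fun k => hAA.eigenvectorBasis.orthonormal.1 k
  -- H is the psd square root of AᴴA
  have hsq : H ^ 2 = Aᴴ * A := by
    rw [hpolar, Matrix.conjTranspose_mul, Matrix.mul_assoc, ← Matrix.mul_assoc Uᴴ, hU₁,
      Matrix.one_mul, hH.1.eq, sq]
  have hHsqrt : H = hAApsd.sqrt := hH.eq_sqrt_of_sq_eq hAApsd hsq
  -- eigen-action of H
  have hHw : ∀ k, H *ᵥ ⇑(hAA.eigenvectorBasis k) = σ k • ⇑(hAA.eigenvectorBasis k) := by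
    intro k
    have h := sqrt_mulVec_eig hAApsd k
    rw [← hHsqrt] at h
    exact h
  have hHw' : ∀ k, f H (w k) = ((σ k : ℝ) : ℂ) • w k := by
    intro k
    apply clm_apply_of_mulVec
    have h := hHw k
    funext i
    have := congrFun h i
    simpa [Complex.real_smul] using this
  -- f A (w k) and its norm
  have hAw : ∀ k, f A (w k) = ((σ k : ℝ) : ℂ) • (f U (w k)) := by
    intro k
    rw [hpolar, _root_.map_mul, ContinuousLinearMap.mul_apply, hHw' k, _root_.map_smul]
  have hAwnorm : ∀ k, ‖f A (w k)‖ = σ k := by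
    intro k
    rw [hAw k, norm_smul, norm_clm_unitary hU₁, hwnorm, mul_one, Complex.norm_real,
      Real.norm_eq_abs, abs_of_nonneg (hσ0 k)]
  -- lower bound
  have hlow : ∀ Q : Matrix (Fin n) (Fin n) ℂ, Qᴴ * Q = 1 → ∀ k,
      |σ k - 1| ≤ spectralNormC (A - Q) := by
    intro Q hQ k
    have h1 : |σ k - 1| = |‖f A (w k)‖ - ‖f Q (w k)‖| := by
      rw [hAwnorm k, norm_clm_unitary hQ, hwnorm k]
    rw [h1]
    calc |‖f A (w k)‖ - ‖f Q (w k)‖| ≤ ‖f A (w k) - f Q (w k)‖ := abs_norm_sub_norm_le _ _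
      _ = ‖f (A - Q) (w k)‖ := by rw [map_sub]; rfl
      _ ≤ ‖f (A - Q)‖ * ‖w k‖ := (f (A - Q)).le_opNorm _
      _ = spectralNormC (A - Q) := by rw [hwnorm k, mul_one]; rfl
  set s := ⨆ k, |σ k - 1| with hsdef
  have hs0 : 0 ≤ s := Real.iSup_nonneg fun k => abs_nonneg _
  -- T = f (H - 1) acts diagonally
  have hTw : ∀ k, f (H - 1) (w k) = ((σ k - 1 : ℝ) : ℂ) • w k := by
    intro k
    rw [map_sub, ContinuousLinearMap.sub_apply, hHw' k, _root_.map_one,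
      ContinuousLinearMap.one_apply]
    push_cast
    rw [sub_smul, one_smul]
  have hTsa : (f (H - 1)).adjoint = f (H - 1) := by
    rw [← ContinuousLinearMap.star_eq_adjoint, ← map_star]
    congr 1
    rw [Matrix.star_eq_conjTranspose, Matrix.conjTranspose_sub, Matrix.conjTranspose_one, hH.1.eq]
  -- upper bound
  have hub : spectralNormC (A - U) ≤ s := by
    show ‖f (A - U)‖ ≤ s
    apply ContinuousLinearMap.opNorm_le_bound _ hs0
    intro v
    have hUadj : Uᴴᴴ * Uᴴ = 1 := by rw [Matrix.conjTranspose_conjTranspose]; exact hU₂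
    have h2 : ‖f (A - U) v‖ = ‖f (H - 1) v‖ := by
      rw [← norm_clm_unitary hUadj (f (A - U) v)]
      congr 1
      rw [← ContinuousLinearMap.comp_apply, ← ContinuousLinearMap.mul_def, ← _root_.map_mul]
      congr 2
      rw [hpolar, Matrix.mul_sub, ← Matrix.mul_assoc, hU₁, Matrix.one_mul]
    rw [h2]
    set b := hAA.eigenvectorBasis
    have key : ∀ k, b.repr (f (H - 1) v) k = ((σ k - 1 : ℝ) : ℂ) * b.repr v k := by
      intro k
      rw [b.repr_apply_apply, b.repr_apply_apply]
      have : ⟪w k, f (H - 1) v⟫_ℂ = ⟪f (H - 1) (w k), v⟫_ℂ := by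
        rw [← ContinuousLinearMap.adjoint_inner_left, hTsa]
      rw [this, hTw k, inner_smul_left, Complex.conj_ofReal]
    have hnorm : ∀ x : EuclideanSpace ℂ (Fin n), ‖x‖ ^ 2 = ∑ k, ‖b.repr x k‖ ^ 2 := by
      intro x
      rw [← b.repr.norm_map x, EuclideanSpace.norm_eq, Real.sq_sqrt]
      positivity
    have hineq : ‖f (H - 1) v‖ ^ 2 ≤ (s * ‖v‖) ^ 2 := by
      rw [hnorm, mul_pow, hnorm v, Finset.mul_sum]
      apply Finset.sum_le_sum
      intro k _
      rw [key k, norm_mul, Complex.norm_real, Real.norm_eq_abs]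
      have h4 : |σ k - 1| ≤ s := by
        rw [hsdef]
        exact le_ciSup (Set.Finite.bddAbove (Set.finite_range fun k => |σ k - 1|)) k
      have h6 : |σ k - 1| ^ 2 ≤ s ^ 2 := pow_le_pow_left₀ (abs_nonneg _) h4 2
      rw [mul_pow]
      exact mul_le_mul_of_nonneg_right h6 (by positivity)
    calc ‖f (H - 1) v‖ = Real.sqrt (‖f (H - 1) v‖ ^ 2) := (Real.sqrt_sq (norm_nonneg _)).symm
      _ ≤ Real.sqrt ((s * ‖v‖) ^ 2) := Real.sqrt_le_sqrt hineq
      _ = s * ‖v‖ := Real.sqrt_sq (mul_nonneg hs0 (norm_nonneg _))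
  have heq : spectralNormC (A - U) = s :=
    le_antisymm hub (Real.iSup_le (hlow U hU₁) (norm_nonneg _))
  exact ⟨fun Q hQ1 _ => heq ▸ Real.iSup_le (hlow Q hQ1) (norm_nonneg _), heq⟩
end

section
/- (Convergence of the Newton iteration for the unitary polar factor) Let A ∈ ℂ^{n×n} be nonsingular with polar decomposition A = UH (U unitary, H Hermitian positive definite), and define the Newton iteration X₀ = A, X_{k+1} = ½(X_k + X_k^{-*}) for k ≥ 0, where X^{-*} denotes the conjugate transpose of the inverse. Then every iterate X_k is nonsingular, the sequence (X_k) converges to U, and the convergence is quadratic: ‖X_{k+1} − U‖ ≤ ½ ‖X_k^{-1}‖ ‖X_k − U‖² for every k, in the spectral norm. -/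
set_option maxHeartbeats 1000000
set_option synthInstance.maxHeartbeats 1000000

open Matrix Filter
open scoped ComplexOrder

noncomputable def newtonG (x : ℝ) : ℝ := (x + x⁻¹) / 2

lemma newtonG_sub_one {x : ℝ} (hx : 0 < x) :
    newtonG x - 1 = (x - 1) ^ 2 / (2 * x) := by
  unfold newtonG; field_simp; ring

lemma one_le_newtonG {x : ℝ} (hx : 0 < x) : 1 ≤ newtonG x := by
  have h := newtonG_sub_one hx
  nlinarith [sq_nonneg (x - 1), div_nonneg (sq_nonneg (x - 1)) (by linarith : (0:ℝ) ≤ 2 * x)]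

lemma newtonG_pos {x : ℝ} (hx : 0 < x) : 0 < newtonG x :=
  lt_of_lt_of_le one_pos (one_le_newtonG hx)

lemma newtonG_sub_one_le {x : ℝ} (hx : 1 ≤ x) : newtonG x - 1 ≤ (x - 1) / 2 := by
  have hx0 : (0:ℝ) < x := lt_of_lt_of_le one_pos hx
  rw [newtonG_sub_one hx0, div_le_div_iff₀ (by linarith) two_pos]
  nlinarith

lemma newton_iter_pos {x : ℝ} (hx : 0 < x) (k : ℕ) : 0 < newtonG^[k] x := by
  induction k with
  | zero => simpa using hx
  | succ k ih => rw [Function.iterate_succ_apply']; exact newtonG_pos ih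

lemma newton_iter_ge_one {x : ℝ} (hx : 0 < x) (k : ℕ) : 1 ≤ newtonG^[k + 1] x := by
  rw [Function.iterate_succ_apply']
  exact one_le_newtonG (newton_iter_pos hx k)

lemma newton_tendsto_one {x : ℝ} (hx : 0 < x) :
    Tendsto (fun k => newtonG^[k] x) atTop (nhds 1) := by
  set t : ℕ → ℝ := fun k => newtonG^[k] x with ht
  have hbound : ∀ k, t (k + 1) - 1 ≤ (1/2 : ℝ) ^ k * (t 1 - 1) := by
    intro k
    induction k with
    | zero => simp
    | succ k ih =>
        have h1 : t (k + 2) - 1 ≤ (t (k + 1) - 1) / 2 := by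
          have := newtonG_sub_one_le (newton_iter_ge_one hx k)
          simpa [ht, Function.iterate_succ_apply'] using this
        calc t (k + 2) - 1 ≤ (t (k + 1) - 1) / 2 := h1
          _ ≤ ((1/2 : ℝ) ^ k * (t 1 - 1)) / 2 := by linarith
          _ = (1/2 : ℝ) ^ (k + 1) * (t 1 - 1) := by ring
  have h1 : Tendsto (fun k => t (k + 1)) atTop (nhds 1) := by
    have hlow : ∀ k, (1:ℝ) ≤ t (k + 1) := fun k => newton_iter_ge_one hx k
    have hup : Tendsto (fun k => 1 + (1/2 : ℝ) ^ k * (t 1 - 1)) atTop (nhds 1) := by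
      have : Tendsto (fun k => (1/2 : ℝ) ^ k * (t 1 - 1)) atTop (nhds 0) := by
        simpa using (tendsto_pow_atTop_nhds_zero_of_lt_one (by norm_num) (by norm_num :
          (1/2:ℝ) < 1)).mul_const (t 1 - 1)
      simpa using tendsto_const_nhds.add this
    exact tendsto_of_tendsto_of_tendsto_of_le_of_le tendsto_const_nhds hup
      (fun k => hlow k) (fun k => by linarith [hbound k])
  exact (tendsto_add_atTop_iff_nat 1).mp h1

/-- Complex-valued entrywise Newton iterates from a vector of (eigen)values. -/
noncomputable def newtonD {n : ℕ} (lam : Fin n → ℝ) (k : ℕ) (i : Fin n) : ℂ :=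
  ((newtonG^[k] (lam i) : ℝ) : ℂ)

lemma newtonD_zero {n : ℕ} (lam : Fin n → ℝ) (i : Fin n) :
    newtonD lam 0 i = ((lam i : ℝ) : ℂ) := by simp [newtonD]

lemma newtonD_ne_zero {n : ℕ} {lam : Fin n → ℝ} (hlam : ∀ i, 0 < lam i) (k : ℕ) (i : Fin n) :
    newtonD lam k i ≠ 0 := by
  simp [newtonD, Complex.ofReal_ne_zero, (newton_iter_pos (hlam i) k).ne']

lemma newtonD_star {n : ℕ} (lam : Fin n → ℝ) (k : ℕ) (i : Fin n) :
    star (newtonD lam k i) = newtonD lam k i := by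
  simp [newtonD, Complex.conj_ofReal]

lemma newtonD_succ {n : ℕ} (lam : Fin n → ℝ) (k : ℕ) (i : Fin n) :
    newtonD lam (k + 1) i = (1/2 : ℂ) * (newtonD lam k i + (newtonD lam k i)⁻¹) := by
  simp only [newtonD, Function.iterate_succ_apply', newtonG]
  push_cast
  ring

lemma newtonD_tendsto {n : ℕ} {lam : Fin n → ℝ} (hlam : ∀ i, 0 < lam i) (i : Fin n) :
    Tendsto (fun k => newtonD lam k i) atTop (nhds 1) := by
  have h1 := newton_tendsto_one (hlam i)
  have h2 : Tendsto (fun k => ((newtonG^[k] (lam i) : ℝ) : ℂ)) atTop (nhds ((1:ℝ):ℂ)) :=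
    (Complex.continuous_ofReal.tendsto _).comp h1
  simpa [newtonD] using h2

lemma spectralNormC_nonneg {n : ℕ} (A : Matrix (Fin n) (Fin n) ℂ) :
    0 ≤ spectralNormC A := norm_nonneg _

lemma spectralNormC_mul_le {n : ℕ} (A B : Matrix (Fin n) (Fin n) ℂ) :
    spectralNormC (A * B) ≤ spectralNormC A * spectralNormC B := by
  simp only [spectralNormC, _root_.map_mul]
  exact norm_mul_le _ _

lemma spectralNormC_conjTranspose {n : ℕ} (A : Matrix (Fin n) (Fin n) ℂ) :
    spectralNormC Aᴴ = spectralNormC A := by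
  simp only [spectralNormC, ← Matrix.star_eq_conjTranspose, map_star,
    ContinuousLinearMap.star_eq_adjoint]
  exact ContinuousLinearMap.adjoint.norm_map _

lemma spectralNormC_smul {n : ℕ} (c : ℂ) (A : Matrix (Fin n) (Fin n) ℂ) :
    spectralNormC (c • A) = ‖c‖ * spectralNormC A := by
  simp only [spectralNormC, _root_.map_smul]
  exact norm_smul c (Matrix.toEuclideanCLM (𝕜 := ℂ) A)

/-- Main workhorse: the Newton iteration with explicitly diagonalized initial data. -/
lemma newton_aux {n : ℕ} (U W : Matrix (Fin n) (Fin n) ℂ)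
    (hU₁ : Uᴴ * U = 1) (hU₂ : U * Uᴴ = 1) (hW₁ : Wᴴ * W = 1) (hW₂ : W * Wᴴ = 1)
    (lam : Fin n → ℝ) (hlam : ∀ i, 0 < lam i)
    (X : ℕ → Matrix (Fin n) (Fin n) ℂ)
    (hX0 : X 0 = U * (W * (diagonal (newtonD lam 0) * Wᴴ)))
    (hXstep : ∀ k, X (k + 1) = (1 / 2 : ℂ) • (X k + ((X k)⁻¹)ᴴ)) :
    (∀ k, IsUnit (X k).det) ∧
      Tendsto X atTop (nhds U) ∧
      ∀ k, spectralNormC (X (k + 1) - U) ≤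
        1 / 2 * spectralNormC ((X k)⁻¹) * spectralNormC (X k - U) ^ 2 := by
  have hWW : ∀ M : Matrix (Fin n) (Fin n) ℂ, Wᴴ * (W * M) = M := fun M => by
    rw [← mul_assoc, hW₁, one_mul]
  have hWW' : ∀ M : Matrix (Fin n) (Fin n) ℂ, W * (Wᴴ * M) = M := fun M => by
    rw [← mul_assoc, hW₂, one_mul]
  have hUU : ∀ M : Matrix (Fin n) (Fin n) ℂ, Uᴴ * (U * M) = M := fun M => by
    rw [← mul_assoc, hU₁, one_mul]
  have hUU' : ∀ M : Matrix (Fin n) (Fin n) ℂ, U * (Uᴴ * M) = M := fun M => by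
    rw [← mul_assoc, hU₂, one_mul]
  have hDD : ∀ (v w : Fin n → ℂ) (M : Matrix (Fin n) (Fin n) ℂ),
      diagonal v * (diagonal w * M) = diagonal (fun i => v i * w i) * M := fun v w M => by
    rw [← mul_assoc, diagonal_mul_diagonal]
  have hd_ne : ∀ k i, newtonD lam k i ≠ 0 := newtonD_ne_zero hlam
  have hYZ : ∀ k, (U * (W * (diagonal (newtonD lam k) * Wᴴ)))
      * (W * (diagonal (fun i => (newtonD lam k i)⁻¹) * (Wᴴ * Uᴴ))) = 1 := by
    intro k
    simp only [mul_assoc, hWW, hDD]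
    have hvw : (fun i => newtonD lam k i * (newtonD lam k i)⁻¹) = fun _ => (1:ℂ) :=
      funext fun i => mul_inv_cancel₀ (hd_ne k i)
    rw [hvw]
    simpa only [diagonal_one, one_mul, hWW'] using hU₂
  have key : ∀ k, X k = U * (W * (diagonal (newtonD lam k) * Wᴴ)) := by
    intro k
    induction k with
    | zero => exact hX0
    | succ k ih =>
        have hinv : (X k)⁻¹ = W * (diagonal (fun i => (newtonD lam k i)⁻¹) * (Wᴴ * Uᴴ)) := by
          rw [ih]
          exact inv_eq_right_inv (hYZ k)
        have hinvH : ((X k)⁻¹)ᴴ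
            = U * (W * (diagonal (fun i => (newtonD lam k i)⁻¹) * Wᴴ)) := by
          rw [hinv]
          simp only [conjTranspose_mul, diagonal_conjTranspose, conjTranspose_conjTranspose]
          have : star (fun i => (newtonD lam k i)⁻¹) = fun i => (newtonD lam k i)⁻¹ := by
            funext i
            show star ((newtonD lam k i)⁻¹) = _
            rw [star_inv₀, newtonD_star lam k i]
          rw [this, mul_assoc, mul_assoc]
        have hdiag : diagonal (newtonD lam (k + 1))
            = (1/2 : ℂ) • (diagonal (newtonD lam k)
              + diagonal (fun i => (newtonD lam k i)⁻¹)) := by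
          ext i j
          rcases eq_or_ne i j with h | h
          · subst h
            simp only [diagonal_apply_eq, Matrix.smul_apply, Matrix.add_apply, smul_eq_mul]
            exact newtonD_succ lam k i
          · simp [Matrix.diagonal_apply_ne _ h, h]
        rw [hXstep k, hinvH, ih, hdiag]
        simp only [smul_mul_assoc, mul_smul_comm, mul_add, add_mul]
  have hXunit : ∀ k, IsUnit (X k).det := by
    intro k
    rw [key k]
    exact Matrix.isUnit_det_of_right_inverse (hYZ k)
  refine ⟨hXunit, ?_, ?_⟩
  · have hDt : Tendsto (fun k => diagonal (newtonD lam k)) atTop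
        (nhds (1 : Matrix (Fin n) (Fin n) ℂ)) := by
      have hcont : Continuous fun v : Fin n → ℂ => diagonal v :=
        continuous_id.matrix_diagonal
      have hpt : Tendsto (fun k => newtonD lam k) atTop (nhds fun _ => (1:ℂ)) :=
        tendsto_pi_nhds.mpr (newtonD_tendsto hlam)
      have := (hcont.tendsto _).comp hpt
      simpa [diagonal_one, Function.comp_def] using this
    have hYt : Tendsto (fun k => U * (W * (diagonal (newtonD lam k) * Wᴴ))) atTop
        (nhds U) := by
      have h1 := ((hDt.mul_const Wᴴ).const_mul W).const_mul U
      simpa [hW₂] using h1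
    exact hYt.congr (fun k => (key k).symm)
  · intro k
    have hinv : (X k)⁻¹ = W * (diagonal (fun i => (newtonD lam k i)⁻¹) * (Wᴴ * Uᴴ)) := by
      rw [key k]
      exact inv_eq_right_inv (hYZ k)
    have hinvH : ((X k)⁻¹)ᴴ
        = U * (W * (diagonal (fun i => (newtonD lam k i)⁻¹) * Wᴴ)) := by
      rw [hinv]
      simp only [conjTranspose_mul, diagonal_conjTranspose, conjTranspose_conjTranspose]
      have : star (fun i => (newtonD lam k i)⁻¹) = fun i => (newtonD lam k i)⁻¹ := by
        funext i
        show star ((newtonD lam k i)⁻¹) = _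
        rw [star_inv₀, newtonD_star lam k i]
      rw [this, mul_assoc, mul_assoc]
    have hsub : ∀ m, X m - U
        = U * (W * (diagonal (fun i => newtonD lam m i - 1) * Wᴴ)) := by
      intro m
      have h1 : U = U * (W * (diagonal (fun _ : Fin n => (1:ℂ)) * Wᴴ)) := by
        rw [diagonal_one, one_mul, hW₂, mul_one]
      calc X m - U
          = U * (W * (diagonal (newtonD lam m) * Wᴴ))
            - U * (W * (diagonal (fun _ : Fin n => (1:ℂ)) * Wᴴ)) := by
            rw [key m, ← h1]
        _ = U * (W * ((diagonal (newtonD lam m)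
              - diagonal (fun _ : Fin n => (1:ℂ))) * Wᴴ)) := by
            rw [sub_mul, mul_sub, mul_sub]
        _ = U * (W * (diagonal (fun i => newtonD lam m i - 1) * Wᴴ)) := by
            rw [diagonal_sub]
    have hsubH : (X k - U)ᴴ
        = W * (diagonal (fun i => newtonD lam k i - 1) * (Wᴴ * Uᴴ)) := by
      rw [hsub k]
      simp only [conjTranspose_mul, diagonal_conjTranspose, conjTranspose_conjTranspose]
      have : star (fun i => newtonD lam k i - 1) = fun i => newtonD lam k i - 1 := by
        funext i
        show star (newtonD lam k i - 1) = _
        rw [star_sub, star_one, newtonD_star lam k i]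
      rw [this, mul_assoc, mul_assoc]
    have hdiag2 : diagonal (fun i => newtonD lam (k + 1) i - 1)
        = (1/2 : ℂ) • diagonal (fun i => (newtonD lam k i)⁻¹
            * ((newtonD lam k i - 1) * (newtonD lam k i - 1))) := by
      ext i j
      rcases eq_or_ne i j with h | h
      · subst h
        simp only [diagonal_apply_eq, Matrix.smul_apply, smul_eq_mul]
        rw [newtonD_succ lam k i]
        have h := hd_ne k i
        field_simp
        ring
      · simp [Matrix.diagonal_apply_ne _ h, h]
    have hidentity : X (k + 1) - U
        = (1/2 : ℂ) • (((X k)⁻¹)ᴴ * ((X k - U)ᴴ * (X k - U))) := by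
      rw [hsub (k + 1), hinvH, hsubH, hsub k]
      simp only [mul_assoc, hUU, hWW, hDD]
      rw [hdiag2]
      simp only [smul_mul_assoc, mul_smul_comm]
    rw [hidentity]
    have e1 : spectralNormC ((1/2 : ℂ) • (((X k)⁻¹)ᴴ * ((X k - U)ᴴ * (X k - U))))
        = 1/2 * spectralNormC (((X k)⁻¹)ᴴ * ((X k - U)ᴴ * (X k - U))) := by
      rw [spectralNormC_smul]
      norm_num
    rw [e1]
    have h1 := spectralNormC_mul_le (((X k)⁻¹)ᴴ) ((X k - U)ᴴ * (X k - U))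
    have h2 := spectralNormC_mul_le ((X k - U)ᴴ) (X k - U)
    rw [spectralNormC_conjTranspose] at h1 h2
    have hn1 : 0 ≤ spectralNormC ((X k)⁻¹) := spectralNormC_nonneg _
    have hn2 : 0 ≤ spectralNormC (X k - U) := spectralNormC_nonneg _
    have hn3 : 0 ≤ spectralNormC ((X k - U)ᴴ * (X k - U)) := spectralNormC_nonneg _
    nlinarith [spectralNormC_nonneg (((X k)⁻¹)ᴴ * ((X k - U)ᴴ * (X k - U)))]

/-- (Convergence of the Newton iteration for the unitary polar factor) For nonsingular `A` with
polar decomposition `A = U H`, the Newton iterates `X₀ = A`, `X_{k+1} = ½(X_k + X_k⁻ᴴ)` are all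
nonsingular, converge to `U`, and satisfy the quadratic convergence bound
`‖X_{k+1} - U‖₂ ≤ ½ ‖X_k⁻¹‖₂ ‖X_k - U‖₂²`. -/
theorem newton_iteration_converges_to_polar_factor {n : ℕ}
    (A U H : Matrix (Fin n) (Fin n) ℂ)
    (hA : IsUnit A.det)
    (hU₁ : Uᴴ * U = 1) (hU₂ : U * Uᴴ = 1)
    (hH : H.PosDef) (hpolar : A = U * H)
    (X : ℕ → Matrix (Fin n) (Fin n) ℂ) (hX0 : X 0 = A)
    (hXstep : ∀ k, X (k + 1) = (1 / 2 : ℂ) • (X k + ((X k)⁻¹)ᴴ)) :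
    (∀ k, IsUnit (X k).det) ∧
      Tendsto X atTop (nhds U) ∧
      ∀ k, spectralNormC (X (k + 1) - U) ≤
        1 / 2 * spectralNormC ((X k)⁻¹) * spectralNormC (X k - U) ^ 2 := by
  have hHh : H.IsHermitian := hH.1
  have hW₁ : (hHh.eigenvectorUnitary : Matrix (Fin n) (Fin n) ℂ)ᴴ
      * (hHh.eigenvectorUnitary : Matrix (Fin n) (Fin n) ℂ) = 1 := by
    have := (Matrix.mem_unitaryGroup_iff').mp hHh.eigenvectorUnitary.2
    simpa [Matrix.star_eq_conjTranspose] using this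
  have hW₂ : (hHh.eigenvectorUnitary : Matrix (Fin n) (Fin n) ℂ)
      * (hHh.eigenvectorUnitary : Matrix (Fin n) (Fin n) ℂ)ᴴ = 1 := by
    have := (Matrix.mem_unitaryGroup_iff).mp hHh.eigenvectorUnitary.2
    simpa [Matrix.star_eq_conjTranspose] using this
  have hX0' : X 0 = U * ((hHh.eigenvectorUnitary : Matrix (Fin n) (Fin n) ℂ)
      * (diagonal (newtonD hHh.eigenvalues 0)
        * (hHh.eigenvectorUnitary : Matrix (Fin n) (Fin n) ℂ)ᴴ)) := by
    rw [hX0, hpolar]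
    congr 1
    have hd0 : newtonD hHh.eigenvalues 0 = RCLike.ofReal ∘ hHh.eigenvalues := by
      funext i
      simp [newtonD_zero, Function.comp]
    rw [hd0]
    have := hHh.spectral_theorem
    simpa [Matrix.star_eq_conjTranspose, mul_assoc] using this
  exact newton_aux U (hHh.eigenvectorUnitary : Matrix (Fin n) (Fin n) ℂ)
    hU₁ hU₂ hW₁ hW₂ hHh.eigenvalues hH.eigenvalues_pos X hX0' hXstep
end

section
/- (Convergence of the Newton–Schulz iteration) Let A ∈ ℂ^{n×n} have rank n, polar decomposition A = UH (U unitary, H Hermitian positive definite), and suppose every singular value of A lies in (0, √3) — equivalently ‖A‖₂ < √3. Define X₀ = A and X_{k+1} = ½ X_k (3I − X_k* X_k) for k ≥ 0. Then X_k converges to U as k → ∞, the convergence is quadratic, and for every k: ‖X_{k+1} − U‖₂ ≤ ½ ‖X_k + 2U‖₂ · ‖X_k − U‖₂². -/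
open Matrix Filter
open scoped ComplexOrder

set_option maxHeartbeats 1000000
set_option synthInstance.maxHeartbeats 400000

namespace NS

lemma snorm_nonneg {n : ℕ} (M : Matrix (Fin n) (Fin n) ℂ) : 0 ≤ spectralNormC M :=
  norm_nonneg _

lemma snorm_smul {n : ℕ} (c : ℂ) (M : Matrix (Fin n) (Fin n) ℂ) :
    spectralNormC (c • M) = ‖c‖ * spectralNormC M := by
  unfold spectralNormC
  rw [_root_.map_smul]
  exact norm_smul c (Matrix.toEuclideanCLM (𝕜 := ℂ) M)

lemma snorm_mul_le {n : ℕ} (M N : Matrix (Fin n) (Fin n) ℂ) :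
    spectralNormC (M * N) ≤ spectralNormC M * spectralNormC N := by
  unfold spectralNormC
  rw [_root_.map_mul]
  exact norm_mul_le _ _

lemma snorm_unitary_le {n : ℕ} {M : Matrix (Fin n) (Fin n) ℂ} (h1 : Mᴴ * M = 1) :
    spectralNormC M ≤ 1 := by
  unfold spectralNormC
  set u := Matrix.toEuclideanCLM (𝕜 := ℂ) M with hu
  have h1' : star M * M = 1 := by rwa [Matrix.star_eq_conjTranspose]
  have hsu : star u * u = 1 := by
    rw [hu, ← map_star, ← _root_.map_mul, h1', _root_.map_one]
  have h2 : ‖u‖ * ‖u‖ = ‖star u * u‖ := (CStarRing.norm_star_mul_self (x := u)).symm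
  rw [hsu] at h2
  have h3 : ‖(1 : EuclideanSpace ℂ (Fin n) →L[ℂ] EuclideanSpace ℂ (Fin n))‖ ≤ 1 :=
    ContinuousLinearMap.norm_id_le
  nlinarith [norm_nonneg u]

lemma snorm_unitary_mul {n : ℕ} {M : Matrix (Fin n) (Fin n) ℂ}
    (h1 : Mᴴ * M = 1) (h2 : M * Mᴴ = 1) (N : Matrix (Fin n) (Fin n) ℂ) :
    spectralNormC (M * N) = spectralNormC N := by
  refine le_antisymm ?_ ?_
  · calc spectralNormC (M * N) ≤ spectralNormC M * spectralNormC N := snorm_mul_le _ _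
    _ ≤ 1 * spectralNormC N := by
        exact mul_le_mul_of_nonneg_right (snorm_unitary_le h1) (snorm_nonneg N)
    _ = spectralNormC N := one_mul _
  · have key : N = Mᴴ * (M * N) := by rw [← Matrix.mul_assoc, h1, Matrix.one_mul]
    calc spectralNormC N = spectralNormC (Mᴴ * (M * N)) := by rw [← key]
    _ ≤ spectralNormC Mᴴ * spectralNormC (M * N) := snorm_mul_le _ _
    _ ≤ 1 * spectralNormC (M * N) := by
        refine mul_le_mul_of_nonneg_right (snorm_unitary_le ?_) (snorm_nonneg _)
        rwa [Matrix.conjTranspose_conjTranspose]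
    _ = spectralNormC (M * N) := one_mul _

/-- The Newton–Schulz scalar map. -/
noncomputable def f (x : ℝ) : ℝ := x * (3 - x ^ 2) / 2

lemma f_mem_Ioc {x : ℝ} (hx : 0 < x) (hx3 : x ^ 2 < 3) : f x ∈ Set.Ioc 0 1 := by
  unfold f
  constructor
  · have h : 0 < 3 - x ^ 2 := by linarith
    positivity
  · nlinarith [sq_nonneg (1 - x), sq_nonneg x]

lemma f_ge_self {x : ℝ} (hx : 0 < x) (hx1 : x ≤ 1) : x ≤ f x := by
  unfold f
  nlinarith

lemma f_continuous : Continuous f := by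
  unfold f; fun_prop

lemma scalar_tendsto {x : ℝ} (hx : x ∈ Set.Ioo 0 (Real.sqrt 3)) :
    Tendsto (fun k => f^[k] x) atTop (nhds 1) := by
  obtain ⟨hx0, hx3⟩ := hx
  have hx2 : x ^ 2 < 3 := by
    have := Real.sq_sqrt (by norm_num : (3:ℝ) ≥ 0).le
    nlinarith [Real.sq_sqrt (by norm_num : (0:ℝ) ≤ 3), Real.sqrt_nonneg 3]
  set y : ℕ → ℝ := fun k => f^[k + 1] x with hy
  have hmem : ∀ k, y k ∈ Set.Ioc 0 1 := by
    intro k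
    induction k with
    | zero => simpa [hy] using f_mem_Ioc hx0 hx2
    | succ k ih =>
      have : y (k + 1) = f (y k) := by
        simp [hy, Function.iterate_succ_apply']
      rw [this]
      exact f_mem_Ioc ih.1 (by nlinarith [ih.1, ih.2])
  have hmono : Monotone y := by
    refine monotone_nat_of_le_succ fun k => ?_
    have : y (k + 1) = f (y k) := by simp [hy, Function.iterate_succ_apply']
    rw [this]
    exact f_ge_self (hmem k).1 (hmem k).2
  have hbdd : BddAbove (Set.range y) := ⟨1, by rintro _ ⟨k, rfl⟩; exact (hmem k).2⟩
  have hT : Tendsto y atTop (nhds (⨆ k, y k)) := tendsto_atTop_ciSup hmono hbdd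
  set L := ⨆ k, y k with hL
  have hL1 : L ≤ 1 := ciSup_le fun k => (hmem k).2
  have hL0 : 0 < L := lt_of_lt_of_le (hmem 0).1 (le_ciSup hbdd 0)
  have hfL : f L = L := by
    have h1 : Tendsto (fun k => y (k + 1)) atTop (nhds L) :=
      (tendsto_add_atTop_iff_nat 1).mpr hT
    have h2 : Tendsto (fun k => f (y k)) atTop (nhds (f L)) :=
      (f_continuous.tendsto L).comp hT
    have h3 : (fun k => y (k + 1)) = fun k => f (y k) := by
      funext k; simp [hy, Function.iterate_succ_apply']
    rw [h3] at h1
    exact tendsto_nhds_unique h2 h1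
  have hLeq : L = 1 := by
    have hcube : L * (3 - L ^ 2) / 2 = L := hfL
    nlinarith [hcube, hL0, hL1]
  have : Tendsto y atTop (nhds 1) := hLeq ▸ hT
  exact (tendsto_add_atTop_iff_nat 1).mp this


lemma step_eq {n : ℕ} (U W : Matrix (Fin n) (Fin n) ℂ) (hU₁ : Uᴴ * U = 1)
    (hW₁ : Wᴴ * W = 1) (hW₂ : W * Wᴴ = 1) (d : Fin n → ℝ) :
    (1 / 2 : ℂ) • ((U * (W * diagonal (fun i => (d i : ℂ)) * Wᴴ)) *
      ((3 : ℂ) • (1 : Matrix (Fin n) (Fin n) ℂ) -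
        (U * (W * diagonal (fun i => (d i : ℂ)) * Wᴴ))ᴴ *
          (U * (W * diagonal (fun i => (d i : ℂ)) * Wᴴ)))) =
      U * (W * diagonal (fun i => (f (d i) : ℂ)) * Wᴴ) := by
  have hU₁' : ∀ B, Uᴴ * (U * B) = B := fun B => by rw [← Matrix.mul_assoc, hU₁, Matrix.one_mul]
  have hW₁' : ∀ B, Wᴴ * (W * B) = B := fun B => by rw [← Matrix.mul_assoc, hW₁, Matrix.one_mul]
  set D : Matrix (Fin n) (Fin n) ℂ := diagonal (fun i => (d i : ℂ)) with hDdef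
  have hD : Dᴴ = D := by
    rw [hDdef]
    simp [Matrix.diagonal_conjTranspose, Complex.conj_ofReal]
  have hconj : (U * (W * D * Wᴴ))ᴴ * (U * (W * D * Wᴴ)) = W * (D * D) * Wᴴ := by
    simp only [Matrix.conjTranspose_mul, Matrix.conjTranspose_conjTranspose, hD,
      Matrix.mul_assoc, hU₁', hW₁']
  rw [hconj]
  have h31 : (3 : ℂ) • (1 : Matrix (Fin n) (Fin n) ℂ) = W * ((3 : ℂ) • 1) * Wᴴ := by
    rw [mul_smul_comm, Matrix.mul_one, smul_mul_assoc, hW₂]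
  rw [h31, ← Matrix.sub_mul, ← Matrix.mul_sub W]
  have hprod : U * (W * D * Wᴴ) * (W * ((3 : ℂ) • 1 - D * D) * Wᴴ) =
      U * (W * (D * ((3 : ℂ) • 1 - D * D)) * Wᴴ) := by
    simp only [Matrix.mul_assoc, hW₁']
  rw [hprod]
  have hsmul : (1 / 2 : ℂ) • (U * (W * (D * ((3 : ℂ) • 1 - D * D)) * Wᴴ)) =
      U * (W * ((1 / 2 : ℂ) • (D * ((3 : ℂ) • 1 - D * D))) * Wᴴ) := by
    simp only [mul_smul_comm, smul_mul_assoc]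
  rw [hsmul]
  congr 3
  have h1 : (3 : ℂ) • (1 : Matrix (Fin n) (Fin n) ℂ) = diagonal (fun _ => (3 : ℂ)) := by
    rw [← Matrix.diagonal_one, ← Matrix.diagonal_smul]
    norm_num [Pi.smul_def]
  rw [hDdef, h1, Matrix.diagonal_mul_diagonal, Matrix.diagonal_sub,
    Matrix.diagonal_mul_diagonal, ← Matrix.diagonal_smul]
  refine congrArg diagonal (funext fun i => ?_)
  simp only [Pi.smul_apply, smul_eq_mul]
  unfold f
  push_cast
  ring

lemma herm_conj {n : ℕ} (W : Matrix (Fin n) (Fin n) ℂ) (d : Fin n → ℝ) :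
    (W * diagonal (fun i => (d i : ℂ)) * Wᴴ)ᴴ = W * diagonal (fun i => (d i : ℂ)) * Wᴴ := by
  have hD : (diagonal (fun i => (d i : ℂ)))ᴴ = diagonal (fun i => (d i : ℂ)) := by
    simp [Matrix.diagonal_conjTranspose, Complex.conj_ofReal]
  simp only [Matrix.conjTranspose_mul, Matrix.conjTranspose_conjTranspose, hD, Matrix.mul_assoc]

lemma eigen_bound {n : ℕ} (A U H : Matrix (Fin n) (Fin n) ℂ)
    (hU₁ : Uᴴ * U = 1) (hH : H.PosDef) (hpolar : A = U * H)
    (hσ : ∀ i, singularValuesC A i ∈ Set.Ioo 0 (Real.sqrt 3)) (i : Fin n) :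
    hH.1.eigenvalues i ∈ Set.Ioo 0 (Real.sqrt 3) := by
  have hpos : 0 < hH.1.eigenvalues i := hH.eigenvalues_pos i
  refine ⟨hpos, ?_⟩
  have hAA : Aᴴ * A = H ^ 2 := by
    rw [hpolar, Matrix.conjTranspose_mul, Matrix.mul_assoc, ← Matrix.mul_assoc Uᴴ, hU₁,
      Matrix.one_mul, hH.1.eq, pow_two]
  have hmem : hH.1.eigenvalues i ∈ spectrum ℝ H := hH.1.eigenvalues_mem_spectrum_real i
  have hsq : (hH.1.eigenvalues i) ^ 2 ∈ spectrum ℝ (H ^ 2) :=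
    spectrum.pow_image_subset H 2 ⟨_, hmem, rfl⟩
  rw [← hAA, Matrix.IsHermitian.spectrum_real_eq_range_eigenvalues (hA := Matrix.isHermitian_conjTranspose_mul_self A)] at hsq
  obtain ⟨j, hj⟩ := hsq
  have hnn : 0 ≤ (Matrix.isHermitian_conjTranspose_mul_self A).eigenvalues j :=
    (Matrix.posSemidef_conjTranspose_mul_self A).eigenvalues_nonneg j
  have h3 : (Matrix.isHermitian_conjTranspose_mul_self A).eigenvalues j < 3 := by
    have := (hσ j).2
    unfold singularValuesC at this
    nlinarith [Real.sq_sqrt hnn,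
      Real.sqrt_nonneg ((Matrix.isHermitian_conjTranspose_mul_self A).eigenvalues j),
      Real.sq_sqrt (by norm_num : (0:ℝ) ≤ 3), Real.sqrt_nonneg (3:ℝ)]
  rw [Real.lt_sqrt hpos.le]
  exact hj ▸ h3

lemma quad_bound {n : ℕ} (U P : Matrix (Fin n) (Fin n) ℂ) (hU₁ : Uᴴ * U = 1)
    (hU₂ : U * Uᴴ = 1) (hP : Pᴴ = P) :
    spectralNormC ((1 / 2 : ℂ) • ((U * P) * ((3:ℂ) • (1 : Matrix (Fin n) (Fin n) ℂ) -
        (U * P)ᴴ * (U * P))) - U) ≤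
      1 / 2 * spectralNormC (U * P + (2:ℂ) • U) * spectralNormC (U * P - U) ^ 2 := by
  have hid : (1/2 : ℂ) • ((U * P) * ((3:ℂ) • (1 : Matrix (Fin n) (Fin n) ℂ) -
        (U * P)ᴴ * (U * P))) - U =
      (-(1/2) : ℂ) • ((U * P + (2:ℂ) • U) * ((Uᴴ * (U * P - U)) * (Uᴴ * (U * P - U)))) := by
    have e0 : (U*P)ᴴ*(U*P) = P*P := by
      rw [Matrix.conjTranspose_mul, Matrix.mul_assoc, ← Matrix.mul_assoc Uᴴ, hU₁,
        Matrix.one_mul, hP]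
    have e1 : Uᴴ * (U*P - U) = P - 1 := by
      rw [Matrix.mul_sub, ← Matrix.mul_assoc, hU₁, Matrix.one_mul]
    rw [e0, e1]
    simp only [Matrix.mul_sub, Matrix.sub_mul, Matrix.mul_add, Matrix.add_mul, mul_smul_comm,
      smul_mul_assoc, Matrix.mul_one, Matrix.one_mul, smul_smul, Matrix.mul_assoc]
    module
  rw [hid, snorm_smul]
  have hc : ‖(-(1/2) : ℂ)‖ = 1/2 := by
    rw [norm_neg]
    simp
  rw [hc]
  have hUu : spectralNormC (Uᴴ * (U * P - U)) = spectralNormC (U * P - U) := by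
    refine snorm_unitary_mul ?_ ?_ _
    · rwa [Matrix.conjTranspose_conjTranspose]
    · rwa [Matrix.conjTranspose_conjTranspose]
  calc 1/2 * spectralNormC ((U * P + (2:ℂ) • U) * ((Uᴴ * (U * P - U)) * (Uᴴ * (U * P - U))))
      ≤ 1/2 * (spectralNormC (U * P + (2:ℂ) • U) *
          spectralNormC ((Uᴴ * (U * P - U)) * (Uᴴ * (U * P - U)))) := by
        have := snorm_mul_le (U * P + (2:ℂ) • U) ((Uᴴ * (U * P - U)) * (Uᴴ * (U * P - U)))
        linarith
    _ ≤ 1/2 * (spectralNormC (U * P + (2:ℂ) • U) *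
          (spectralNormC (Uᴴ * (U * P - U)) * spectralNormC (Uᴴ * (U * P - U)))) := by
        have h2 := snorm_mul_le (Uᴴ * (U * P - U)) (Uᴴ * (U * P - U))
        nlinarith [snorm_nonneg (U * P + (2:ℂ) • U), snorm_nonneg ((Uᴴ * (U * P - U)) * (Uᴴ * (U * P - U)))]
    _ = 1/2 * spectralNormC (U * P + (2:ℂ) • U) * spectralNormC (U * P - U) ^ 2 := by
        rw [hUu]
        ring

end NS

/-- (Convergence of the Newton–Schulz iteration) If `A` is nonsingular with polar decomposition
`A = U H` and all singular values of `A` lie in `(0, √3)`, then the Newton–Schulz iterates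
`X₀ = A`, `X_{k+1} = ½ X_k (3I - Xₖᴴ Xₖ)` converge to `U`, quadratically:
`‖X_{k+1} - U‖₂ ≤ ½ ‖X_k + 2U‖₂ ‖X_k - U‖₂²`. -/
theorem newton_schulz_converges_to_polar_factor {n : ℕ}
    (A U H : Matrix (Fin n) (Fin n) ℂ)
    (hA : IsUnit A.det)
    (hU₁ : Uᴴ * U = 1) (hU₂ : U * Uᴴ = 1)
    (hH : H.PosDef) (hpolar : A = U * H)
    (hσ : ∀ i, singularValuesC A i ∈ Set.Ioo 0 (Real.sqrt 3))
    (X : ℕ → Matrix (Fin n) (Fin n) ℂ) (hX0 : X 0 = A)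
    (hXstep : ∀ k, X (k + 1) =
      (1 / 2 : ℂ) • (X k * ((3 : ℂ) • (1 : Matrix (Fin n) (Fin n) ℂ) - (X k)ᴴ * X k))) :
    Tendsto X atTop (nhds U) ∧
      ∀ k, spectralNormC (X (k + 1) - U) ≤
        1 / 2 * spectralNormC (X k + (2 : ℂ) • U) * spectralNormC (X k - U) ^ 2 := by
  set W : Matrix (Fin n) (Fin n) ℂ := (hH.1.eigenvectorUnitary : Matrix (Fin n) (Fin n) ℂ)
    with hWdef
  set ev : Fin n → ℝ := hH.1.eigenvalues with hevdef
  have hW₁ : Wᴴ * W = 1 := by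
    rw [← Matrix.star_eq_conjTranspose]
    exact Unitary.coe_star_mul_self hH.1.eigenvectorUnitary
  have hW₂ : W * Wᴴ = 1 := by
    rw [← Matrix.star_eq_conjTranspose]
    exact Unitary.coe_mul_star_self hH.1.eigenvectorUnitary
  have hspec : H = W * diagonal (fun i => (ev i : ℂ)) * Wᴴ := by
    rw [← Matrix.star_eq_conjTranspose]
    exact hH.1.spectral_theorem
  have hev : ∀ i, ev i ∈ Set.Ioo 0 (Real.sqrt 3) :=
    fun i => NS.eigen_bound A U H hU₁ hH hpolar hσ i
  have key : ∀ k, X k = U * (W * diagonal (fun i => ((NS.f^[k] (ev i) : ℝ) : ℂ)) * Wᴴ) := by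
    intro k
    induction k with
    | zero =>
      simpa [Function.iterate_zero, hX0, hpolar] using congrArg (U * ·) hspec
    | succ k ih =>
      have hstep2 : (fun i => ((NS.f ((fun j => NS.f^[k] (ev j)) i) : ℝ) : ℂ)) =
          fun i => ((NS.f^[k + 1] (ev i) : ℝ) : ℂ) := by
        funext i
        rw [Function.iterate_succ_apply']
      rw [hXstep k, ih, NS.step_eq U W hU₁ hW₁ hW₂ (fun i => NS.f^[k] (ev i)), hstep2]
  constructor
  · have hcont : Continuous (fun v : Fin n → ℂ => U * (W * diagonal v * Wᴴ)) := by
      exact continuous_const.matrix_mul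
        ((continuous_const.matrix_mul continuous_id.matrix_diagonal).matrix_mul continuous_const)
    have hv : Tendsto (fun k => fun i => ((NS.f^[k] (ev i) : ℝ) : ℂ)) atTop
        (nhds (fun _ => (1 : ℂ))) := by
      rw [tendsto_pi_nhds]
      intro i
      exact (Complex.continuous_ofReal.tendsto 1).comp (NS.scalar_tendsto (hev i))
    have hlim : Tendsto (fun k => U * (W * diagonal (fun i => ((NS.f^[k] (ev i) : ℝ) : ℂ)) * Wᴴ))
        atTop (nhds (U * (W * diagonal (fun _ => (1:ℂ)) * Wᴴ))) :=
      (hcont.tendsto _).comp hv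
    have hone : U * (W * diagonal (fun _ => (1:ℂ)) * Wᴴ) = U := by
      have : diagonal (fun _ : Fin n => (1:ℂ)) = 1 := Matrix.diagonal_one
      rw [this, Matrix.mul_one, hW₂, Matrix.mul_one]
    rw [hone] at hlim
    have hfun : X = fun k => U * (W * diagonal (fun i => ((NS.f^[k] (ev i) : ℝ) : ℂ)) * Wᴴ) :=
      funext key
    rw [hfun]
    exact hlim
  · intro k
    have hP : (W * diagonal (fun i => ((NS.f^[k] (ev i) : ℝ) : ℂ)) * Wᴴ)ᴴ =
        W * diagonal (fun i => ((NS.f^[k] (ev i) : ℝ) : ℂ)) * Wᴴ :=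
      NS.herm_conj W _
    rw [hXstep k, key k]
    exact NS.quad_bound U _ hU₁ hU₂ hP
end
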